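/- arXiv:2508.21543 — 6 statements merged into one kernel-verified Lean document; each statement's English description precedes it below -/
import Mathlib

section
/- Let (X, Σ, μ) and (Y, Γ, ν) be finite measure spaces and let K : L¹(X, μ) → L¹(Y, ν) be an integral operator with kernel k : X × Y → ℝ, meaning that for every f ∈ L¹(X, μ), the function x ↦ k(x,y)f(x) is integrable for ν-a.e. y and (Kf)(y) = ∫_X k(x,y) f(x) dμ(x) for ν-a.e. y. Then k is integrable on the product space, i.e. k ∈ L¹(X × Y, μ ⊗ ν). -/
open MeasureTheory Set
open scoped ENNReal symmDiff

/-!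
Let `ψ y = ∫ |k (x, y)| dμ(x)`; it is finite for a.e. `y` by testing the kernel representation on
`f = 1`. On each sublevel set `B = {ψ ≤ m}` the kernel is integrable over `X × B`, and we bound
`∫∫_{X × B} |k|` by `2 ‖K‖ μ(X)` independently of `m`; monotone convergence then concludes.

For the uniform bound, testing `K` on `1_A` and integrating over `E ⊆ B` gives
`|∫_A ∫_E k(x, y) dν dμ| ≤ ‖K‖ μ(A)`, hence `|∫_E k(x, y) dν(y)| ≤ ‖K‖` for a.e. `x`, for each
fixed `E`. Since the null set depends on `E`, this bounds `|∫_S k|` by `‖K‖ μ(X)` only for sets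
`S` with countably many distinct sections; those form a ring generating the product σ-algebra,
so they are dense for the finite measure `|k| d(μ ⊗ ν)` and the bound extends to every measurable
`S`. Taking `S = {k ≥ 0}` and its complement gives the factor `2`.
-/

section CountableSections

variable {X Y : Type*} [MeasurableSpace X] [MeasurableSpace Y]

def countableSectionSets (X Y : Type*) [MeasurableSpace X] [MeasurableSpace Y] :
    Set (Set (X × Y)) :=
  {S | MeasurableSet S ∧ (range fun x : X => Prod.mk x ⁻¹' S).Countable}

theorem isSetRing_countableSectionSets : IsSetRing (countableSectionSets X Y) where
  empty_mem := ⟨.empty, (countable_singleton ∅).mono <| by rintro _ ⟨x, rfl⟩; simp⟩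
  union_mem _ _ hS hT := ⟨hS.1.union hT.1, (hS.2.image2 hT.2 (· ∪ ·)).mono <| by
    rintro _ ⟨x, rfl⟩; exact ⟨_, ⟨x, rfl⟩, _, ⟨x, rfl⟩, rfl⟩⟩
  sdiff_mem _ _ hS hT := ⟨hS.1.diff hT.1, (hS.2.image2 hT.2 (· \ ·)).mono <| by
    rintro _ ⟨x, rfl⟩; exact ⟨_, ⟨x, rfl⟩, _, ⟨x, rfl⟩, rfl⟩⟩

theorem prod_mem_countableSectionSets {A : Set X} {B : Set Y} (hA : MeasurableSet A)
    (hB : MeasurableSet B) : A ×ˢ B ∈ countableSectionSets X Y := by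
  classical
  refine ⟨hA.prod hB, (countable_singleton ∅).insert B |>.mono ?_⟩
  rintro _ ⟨x, rfl⟩
  by_cases hx : x ∈ A <;> simp [hx]

theorem generateFrom_countableSectionSets :
    MeasurableSpace.generateFrom (countableSectionSets X Y) = Prod.instMeasurableSpace := by
  refine le_antisymm (MeasurableSpace.generateFrom_le fun S hS => hS.1) ?_
  rw [← generateFrom_prod]
  refine MeasurableSpace.generateFrom_mono ?_
  rintro _ ⟨A, hA, B, hB, rfl⟩
  exact prod_mem_countableSectionSets hA hB

theorem exists_mem_countableSectionSets_measure_symmDiff_lt (ρ : Measure (X × Y))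
    [IsFiniteMeasure ρ] {S : Set (X × Y)} (hS : MeasurableSet S) {ε : ℝ≥0∞} (hε : 0 < ε) :
    ∃ T ∈ countableSectionSets X Y, ρ (T ∆ S) < ε :=
  exists_measure_symmDiff_lt_of_generateFrom_isSetRing isSetRing_countableSectionSets
    ⟨{univ}, countable_singleton _, by
      simpa using prod_mem_countableSectionSets (X := X) (Y := Y) .univ .univ, by simp⟩
    generateFrom_countableSectionSets.symm hS hε

end CountableSections

section SetIntegral

variable {α : Type*} [MeasurableSpace α] {μ : Measure α}

theorem enorm_setIntegral_sub_setIntegral_le {f : α → ℝ} (hf : Integrable f μ) {s t : Set α}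
    (hs : MeasurableSet s) (ht : MeasurableSet t) :
    ‖∫ x in s, f x ∂μ - ∫ x in t, f x ∂μ‖ₑ ≤ ∫⁻ x in s ∆ t, ‖f x‖ₑ ∂μ := by
  have hsplit : ∫ x in s, f x ∂μ - ∫ x in t, f x ∂μ
      = ∫ x in s \ t, f x ∂μ - ∫ x in t \ s, f x ∂μ := by
    rw [← integral_inter_add_sdiff ht hf.integrableOn,
      ← integral_inter_add_sdiff hs (s := t) hf.integrableOn, inter_comm]
    ring
  rw [hsplit, symmDiff_def]
  change _ ≤ ∫⁻ x in s \ t ∪ t \ s, ‖f x‖ₑ ∂μ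
  rw [lintegral_union (ht.diff hs) disjoint_sdiff_sdiff]
  exact enorm_sub_le.trans
    (add_le_add (enorm_integral_le_lintegral_enorm _) (enorm_integral_le_lintegral_enorm _))

theorem lintegral_enorm_eq_enorm_integral {f : α → ℝ} (hf : Integrable f μ)
    (h : 0 ≤ᵐ[μ] f) : ∫⁻ x, ‖f x‖ₑ ∂μ = ‖∫ x, f x ∂μ‖ₑ := by
  rw [Real.enorm_eq_ofReal (integral_nonneg_of_ae h), ofReal_integral_eq_lintegral_ofReal hf h]
  exact lintegral_congr_ae (h.mono fun x hx => Real.enorm_eq_ofReal hx)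

theorem ae_abs_le_of_forall_abs_setIntegral_le [IsFiniteMeasure μ] {g : α → ℝ}
    (hg : Integrable g μ) {c : ℝ}
    (h : ∀ s, MeasurableSet s → |∫ x in s, g x ∂μ| ≤ c * μ.real s) :
    ∀ᵐ x ∂μ, |g x| ≤ c := by
  have hc : ∀ s, MeasurableSet s → ∫ x in s, c ∂μ = c * μ.real s := fun s _ => by
    rw [setIntegral_const, smul_eq_mul, mul_comm]
  have hle := ae_le_of_forall_setIntegral_le hg (integrable_const c) fun s hs _ => by
    rw [hc s hs]; exact (le_abs_self _).trans (h s hs)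
  have hge := ae_le_of_forall_setIntegral_le hg.neg (integrable_const c) fun s hs _ => by
    rw [hc s hs]; simp only [Pi.neg_apply, integral_neg]; exact (neg_le_abs _).trans (h s hs)
  filter_upwards [hle, hge] with x hx hx'
  exact abs_le.mpr ⟨by simp at hx'; linarith, hx⟩

theorem lintegral_le_of_forall_setLIntegral_sublevel_le {f : α → ℝ≥0∞}
    (hf : ∀ᵐ x ∂μ, f x < ∞) {M : ℝ≥0∞}
    (h : ∀ m : ℕ, ∫⁻ x in {x | f x ≤ m}, f x ∂μ ≤ M) : ∫⁻ x, f x ∂μ ≤ M := by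
  have hcover : ∀ᵐ x ∂μ, x ∈ ⋃ m : ℕ, {x | f x ≤ m} := hf.mono fun x hx => by
    obtain ⟨m, hm⟩ := ENNReal.exists_nat_gt hx.ne
    exact mem_iUnion.mpr ⟨m, hm.le⟩
  have hmono : Monotone fun m : ℕ => {x | f x ≤ m} := fun m n hmn x (hx : f x ≤ m) =>
    hx.trans (by exact_mod_cast hmn)
  rw [← Measure.restrict_eq_self_of_ae_mem hcover,
    setLIntegral_iUnion_of_directed _ hmono.directed_le]
  exact iSup_le h

end SetIntegral

section SectionBound

variable {X Y : Type*} [MeasurableSpace X] [MeasurableSpace Y] {μ : Measure X} {ν : Measure Y}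
  [SFinite μ] [SFinite ν] {F : X × Y → ℝ} {C : ℝ≥0∞}

theorem enorm_setIntegral_le_of_mem_countableSectionSets (hF : Integrable F (μ.prod ν))
    (hsec : ∀ E, MeasurableSet E → ∀ᵐ x ∂μ, ‖∫ y in E, F (x, y) ∂ν‖ₑ ≤ C)
    {S : Set (X × Y)} (hS : S ∈ countableSectionSets X Y) :
    ‖∫ p in S, F p ∂μ.prod ν‖ₑ ≤ C * μ univ := by
  obtain ⟨hSm, hcount⟩ := hS
  have hsections : ∀ᵐ x ∂μ, ‖∫ y in Prod.mk x ⁻¹' S, F (x, y) ∂ν‖ₑ ≤ C := by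
    have hall : ∀ᵐ x ∂μ, ∀ E ∈ range fun x' : X => Prod.mk x' ⁻¹' S,
        ‖∫ y in E, F (x, y) ∂ν‖ₑ ≤ C :=
      (ae_ball_iff hcount).mpr <| by
        rintro _ ⟨x', rfl⟩
        exact hsec _ (measurable_prodMk_left hSm)
    filter_upwards [hall] with x hx using hx _ (mem_range_self x)
  rw [← integral_indicator hSm, integral_prod _ (hF.indicator hSm)]
  calc ‖∫ x, ∫ y, S.indicator F (x, y) ∂ν ∂μ‖ₑ
      ≤ ∫⁻ x, ‖∫ y, S.indicator F (x, y) ∂ν‖ₑ ∂μ := enorm_integral_le_lintegral_enorm _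
    _ ≤ ∫⁻ _, C ∂μ := lintegral_mono_ae <| hsections.mono fun x hx => by
        rwa [← integral_indicator (measurable_prodMk_left hSm)] at hx
    _ = C * μ univ := lintegral_const C

theorem enorm_setIntegral_prod_le_of_ae_section (hF : Integrable F (μ.prod ν))
    (hsec : ∀ E, MeasurableSet E → ∀ᵐ x ∂μ, ‖∫ y in E, F (x, y) ∂ν‖ₑ ≤ C)
    {S : Set (X × Y)} (hS : MeasurableSet S) :
    ‖∫ p in S, F p ∂μ.prod ν‖ₑ ≤ C * μ univ := by
  set ρ := (μ.prod ν).withDensity fun p => ‖F p‖ₑ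
  have : IsFiniteMeasure ρ := isFiniteMeasure_withDensity hF.2.ne
  refine ENNReal.le_of_forall_pos_le_add fun ε hε _ => ?_
  obtain ⟨T, hT, hTS⟩ :=
    exists_mem_countableSectionSets_measure_symmDiff_lt ρ hS (ENNReal.coe_pos.mpr hε)
  rw [withDensity_apply _ (hT.1.symmDiff hS)] at hTS
  calc ‖∫ p in S, F p ∂μ.prod ν‖ₑ
      ≤ ‖∫ p in T, F p ∂μ.prod ν‖ₑ + ‖∫ p in T, F p ∂μ.prod ν - ∫ p in S, F p ∂μ.prod ν‖ₑ := by
        simpa using enorm_sub_le (a := ∫ p in T, F p ∂μ.prod ν)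
          (b := ∫ p in T, F p ∂μ.prod ν - ∫ p in S, F p ∂μ.prod ν)
    _ ≤ C * μ univ + ε := add_le_add (enorm_setIntegral_le_of_mem_countableSectionSets hF hsec hT)
        ((enorm_setIntegral_sub_setIntegral_le hF hT.1 hS).trans hTS.le)

theorem lintegral_enorm_prod_le_of_ae_section (hF : Integrable F (μ.prod ν))
    (hsec : ∀ E, MeasurableSet E → ∀ᵐ x ∂μ, ‖∫ y in E, F (x, y) ∂ν‖ₑ ≤ C) :
    ∫⁻ p, ‖F p‖ₑ ∂μ.prod ν ≤ 2 * C * μ univ := by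
  set P := {p | 0 ≤ hF.1.mk F p}
  have hP : MeasurableSet P :=
    measurableSet_le measurable_const hF.1.stronglyMeasurable_mk.measurable
  have hpos : 0 ≤ᵐ[(μ.prod ν).restrict P] F := by
    filter_upwards [ae_restrict_mem hP, ae_restrict_of_ae hF.1.ae_eq_mk] with p hp hpF
    rw [Pi.zero_apply, hpF]
    exact hp
  have hneg : 0 ≤ᵐ[(μ.prod ν).restrict Pᶜ] -F := by
    filter_upwards [ae_restrict_mem hP.compl, ae_restrict_of_ae hF.1.ae_eq_mk] with p hp hpF
    simp only [Pi.zero_apply, Pi.neg_apply, hpF, neg_nonneg]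
    exact (not_le.mp (notMem_ofPred_iff.mp hp)).le
  rw [← lintegral_add_compl _ hP, two_mul, add_mul]
  gcongr
  · rw [lintegral_enorm_eq_enorm_integral hF.integrableOn hpos]
    exact enorm_setIntegral_prod_le_of_ae_section hF hsec hP
  · calc ∫⁻ p in Pᶜ, ‖F p‖ₑ ∂μ.prod ν = ∫⁻ p in Pᶜ, ‖(-F) p‖ₑ ∂μ.prod ν := by simp
      _ = ‖∫ p in Pᶜ, (-F) p ∂μ.prod ν‖ₑ :=
        lintegral_enorm_eq_enorm_integral hF.neg.integrableOn hneg
      _ = ‖∫ p in Pᶜ, F p ∂μ.prod ν‖ₑ := by simp [integral_neg]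
      _ ≤ C * μ univ := enorm_setIntegral_prod_le_of_ae_section hF hsec hP.compl

end SectionBound

section KernelOperator

variable {X Y : Type*} [MeasurableSpace X] [MeasurableSpace Y] {μ : Measure X} {ν : Measure Y}
  [IsFiniteMeasure μ] {K : Lp ℝ 1 μ →L[ℝ] Lp ℝ 1 ν} {k : X × Y → ℝ}

theorem ae_integrable_kernel_section
    (hint : ∀ f : Lp ℝ 1 μ, ∀ᵐ y ∂ν, Integrable (fun x => k (x, y) * f x) μ) :
    ∀ᵐ y ∂ν, Integrable (fun x => k (x, y)) μ := by
  filter_upwards [hint (indicatorConstLp 1 .univ (measure_ne_top μ univ) 1)] with y hy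
  refine hy.congr ?_
  filter_upwards [indicatorConstLp_coeFn (p := 1) (hs := .univ) (hμs := measure_ne_top μ univ)
    (c := (1 : ℝ))] with x hx
  rw [hx]
  simp

theorem ae_apply_indicatorConstLp_eq_setIntegral
    (hrep : ∀ f : Lp ℝ 1 μ, ∀ᵐ y ∂ν, (K f : Y → ℝ) y = ∫ x, k (x, y) * f x ∂μ)
    {A : Set X} (hA : MeasurableSet A) :
    ∀ᵐ y ∂ν, (K (indicatorConstLp 1 hA (measure_ne_top μ A) 1) : Y → ℝ) y
      = ∫ x in A, k (x, y) ∂μ := by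
  filter_upwards [hrep (indicatorConstLp 1 hA (measure_ne_top μ A) 1)] with y hy
  rw [hy, ← integral_indicator hA]
  refine integral_congr_ae ?_
  filter_upwards [indicatorConstLp_coeFn (p := 1) (hs := hA) (hμs := measure_ne_top μ A)
    (c := (1 : ℝ))] with x hx
  by_cases h : x ∈ A <;> simp [hx, h]

theorem abs_setIntegral_kernel_le [SFinite ν]
    (hrep : ∀ f : Lp ℝ 1 μ, ∀ᵐ y ∂ν, (K f : Y → ℝ) y = ∫ x, k (x, y) * f x ∂μ)
    {E : Set Y} (hk : Integrable k (μ.prod (ν.restrict E))) {A : Set X} (hA : MeasurableSet A) :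
    |∫ x in A, ∫ y in E, k (x, y) ∂ν ∂μ| ≤ ‖K‖ * μ.real A := by
  set f := indicatorConstLp 1 hA (measure_ne_top μ A) (1 : ℝ)
  have hswap : ∫ x in A, ∫ y in E, k (x, y) ∂ν ∂μ = ∫ y in E, (K f : Y → ℝ) y ∂ν := by
    rw [integral_integral_swap (f := fun x y => k (x, y))
      (hk.mono_measure (Measure.prod_mono Measure.restrict_le_self le_rfl))]
    exact integral_congr_ae <|
      (ae_restrict_of_ae (ae_apply_indicatorConstLp_eq_setIntegral hrep hA)).mono fun _ h => h.symm
  calc |∫ x in A, ∫ y in E, k (x, y) ∂ν ∂μ| = ‖∫ y in E, (K f : Y → ℝ) y ∂ν‖ := by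
        rw [hswap, Real.norm_eq_abs]
    _ ≤ ∫ y in E, ‖(K f : Y → ℝ) y‖ ∂ν := norm_integral_le_integral_norm _
    _ ≤ ∫ y, ‖(K f : Y → ℝ) y‖ ∂ν :=
        setIntegral_le_integral (L1.integrable_coeFn _).norm (ae_of_all _ fun _ => norm_nonneg _)
    _ = ‖K f‖ := (L1.norm_eq_integral_norm _).symm
    _ ≤ ‖K‖ * ‖f‖ := K.le_opNorm f
    _ = ‖K‖ * μ.real A := by rw [norm_indicatorConstLp one_ne_zero ENNReal.one_ne_top]; simp

theorem ae_enorm_setIntegral_kernel_le [SFinite ν]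
    (hrep : ∀ f : Lp ℝ 1 μ, ∀ᵐ y ∂ν, (K f : Y → ℝ) y = ∫ x, k (x, y) * f x ∂μ)
    {E : Set Y} (hk : Integrable k (μ.prod (ν.restrict E))) :
    ∀ᵐ x ∂μ, ‖∫ y in E, k (x, y) ∂ν‖ₑ ≤ ‖K‖ₑ := by
  filter_upwards [ae_abs_le_of_forall_abs_setIntegral_le hk.integral_prod_left
    fun A hA => abs_setIntegral_kernel_le hrep hk hA] with x hx
  rw [← ofReal_norm, ← ofReal_norm]
  exact ENNReal.ofReal_le_ofReal hx

theorem lintegral_enorm_prod_restrict_le [SFinite ν]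
    (hrep : ∀ f : Lp ℝ 1 μ, ∀ᵐ y ∂ν, (K f : Y → ℝ) y = ∫ x, k (x, y) * f x ∂μ)
    {B : Set Y} (hk : Integrable k (μ.prod (ν.restrict B))) :
    ∫⁻ p, ‖k p‖ₑ ∂μ.prod (ν.restrict B) ≤ 2 * ‖K‖ₑ * μ univ :=
  lintegral_enorm_prod_le_of_ae_section hk fun E hE => by
    rw [Measure.restrict_restrict hE]
    exact ae_enorm_setIntegral_kernel_le hrep <| hk.mono_measure <|
      Measure.prod_mono le_rfl (Measure.restrict_mono inter_subset_right le_rfl)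

end KernelOperator

/-- If `K : L¹(μ) → L¹(ν)` is a bounded operator between `L¹`-spaces of
finite measure spaces admitting a kernel representation with kernel `k`, then
`k` is integrable on the product space. -/
theorem integral_operator_kernel_integrable
    {X Y : Type*} [MeasurableSpace X] [MeasurableSpace Y]
    (μ : Measure X) (ν : Measure Y) [IsFiniteMeasure μ] [IsFiniteMeasure ν]
    (K : Lp ℝ 1 μ →L[ℝ] Lp ℝ 1 ν) (k : X × Y → ℝ) (hk : Measurable k)
    (hint : ∀ f : Lp ℝ 1 μ, ∀ᵐ y ∂ν, Integrable (fun x => k (x, y) * f x) μ)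
    (hrep : ∀ f : Lp ℝ 1 μ, ∀ᵐ y ∂ν, (K f : Y → ℝ) y = ∫ x, k (x, y) * f x ∂μ) :
    Integrable k (μ.prod ν) := by
  set ψ : Y → ℝ≥0∞ := fun y => ∫⁻ x, ‖k (x, y)‖ₑ ∂μ
  have hlint (B : Set Y) : ∫⁻ p, ‖k p‖ₑ ∂μ.prod (ν.restrict B) = ∫⁻ y in B, ψ y ∂ν :=
    lintegral_prod_symm' _ hk.enorm
  have hbound (m : ℕ) : ∫⁻ y in {y | ψ y ≤ m}, ψ y ∂ν ≤ 2 * ‖K‖ₑ * μ univ := by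
    set B := {y | ψ y ≤ m}
    have hkB : Integrable k (μ.prod (ν.restrict B)) := by
      refine ⟨hk.aestronglyMeasurable, ?_⟩
      rw [HasFiniteIntegral, hlint]
      calc ∫⁻ y in B, ψ y ∂ν ≤ ∫⁻ _ in B, (m : ℝ≥0∞) ∂ν :=
            setLIntegral_mono measurable_const fun y hy => hy
        _ = m * ν B := setLIntegral_const _ _
        _ < ∞ := ENNReal.mul_lt_top (by simp) (measure_lt_top ν B)
    exact hlint B ▸ lintegral_enorm_prod_restrict_le hrep hkB
  have htotal := hlint univ
  rw [Measure.restrict_univ] at htotal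
  refine ⟨hk.aestronglyMeasurable, ?_⟩
  rw [HasFiniteIntegral, htotal]
  refine (lintegral_le_of_forall_setLIntegral_sublevel_le ?_ hbound).trans_lt ?_
  · filter_upwards [ae_integrable_kernel_section hint] with y hy using hy.2
  · exact ENNReal.mul_lt_top (ENNReal.mul_lt_top (by simp) enorm_lt_top) (measure_lt_top μ univ)
end

section
/- Let (X, Σ, μ) be a strictly localizable measure space and M ⊆ L¹(X, Σ, μ) a separable subset. Then there exist a σ-finite measurable set Ω ⊆ X and a countably generated σ-subalgebra Σ̃ of Σ on Ω such that L¹(Ω, Σ̃, μ) is a closed sublattice of L¹(X, Σ, μ) containing M; in particular M is contained in a 1-complemented separable sublattice of L¹(X, Σ, μ) which is itself an L¹-space. -/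
open MeasureTheory

/-- A measure space is *strictly localizable* if it decomposes into a partition of
measurable sets of finite measure which determines measurability and measure. -/
def StrictlyLocalizable {X : Type*} [MeasurableSpace X] (μ : Measure X) : Prop :=
  ∃ (ι : Type) (X' : ι → Set X),
    Pairwise (Function.onFun Disjoint X') ∧
    (⋃ i, X' i) = Set.univ ∧
    (∀ i, MeasurableSet (X' i) ∧ μ (X' i) < ⊤) ∧
    (∀ A : Set X, (∀ i, MeasurableSet (A ∩ X' i)) → MeasurableSet A) ∧
    (∀ A : Set X, MeasurableSet A → μ A = ∑' i, μ (A ∩ X' i))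

/-! A separable `M` lies in the closure of a countable family `(fₙ)` of integrable
functions. The σ-algebra `Σ̃` generated by the `fₙ` is countably generated, and
`Ω = ⋃ₙ {fₙ ≠ 0}` is σ-finite because every `{|fₙ| ≥ 1/(k+1)}` has finite measure.
The space `F = L¹(Ω, Σ̃, μ)` contains every `fₙ`, and it is both the range and the
fixed-point set of the contraction `f ↦ 1_Ω · 𝔼[f|_Ω | Σ̃]`; hence it is closed, contains `M`,
and is 1-complemented. It is separable as an isometric image of `L¹` of the σ-finite
measure `μ|_Ω` on the countably generated `Σ̃`. -/

open Set Function TopologicalSpace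
open scoped ENNReal

namespace MeasureTheory

section ExtendByZero

variable {α 𝕜 E : Type*} [MeasurableSpace α] {μ : Measure α} [NormedField 𝕜]
  [NormedAddCommGroup E] [NormedSpace 𝕜 E] {p : ℝ≥0∞} [Fact (1 ≤ p)] {s : Set α}

variable (𝕜) in
noncomputable def Lp.extendByZero (hs : MeasurableSet s) :
    Lp E p (μ.restrict s) →ₗᵢ[𝕜] Lp E p μ where
  toFun f := ((memLp_indicator_iff_restrict hs).2 (Lp.memLp f)).toLp (s.indicator f)
  map_add' f g := by
    rw [← MemLp.toLp_add]
    exact MemLp.toLp_congr _ _ (by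
      rw [← indicator_add']
      exact (ae_eq_restrict_iff_indicator_ae_eq hs).1 (Lp.coeFn_add f g))
  map_smul' c f := by
    rw [RingHom.id_apply, ← MemLp.toLp_const_smul]
    exact MemLp.toLp_congr _ _ <| ((ae_eq_restrict_iff_indicator_ae_eq hs).1
      (Lp.coeFn_smul c f)).trans (.of_eq (indicator_const_smul s c _))
  norm_map' f := by
    simp only [LinearMap.coe_mk, AddHom.coe_mk]
    rw [Lp.norm_toLp, eLpNorm_indicator_eq_eLpNorm_restrict hs, Lp.norm_def]

variable (𝕜) in
theorem Lp.coeFn_extendByZero (hs : MeasurableSet s) (f : Lp E p (μ.restrict s)) :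
    Lp.extendByZero 𝕜 hs f =ᵐ[μ] s.indicator f := by
  simp only [Lp.extendByZero, LinearIsometry.coe_mk, LinearMap.coe_mk, AddHom.coe_mk]
  exact MemLp.coeFn_toLp _

end ExtendByZero

theorem sigmaFinite_restrict_iUnion_support {α ι E : Type*} [MeasurableSpace α] [Countable ι]
    [NormedAddCommGroup E] {ν : Measure α} {g : ι → α → E}
    (hgm : ∀ i, StronglyMeasurable (g i)) (hgi : ∀ i, Integrable (g i) ν) :
    SigmaFinite (ν.restrict (⋃ i, support (g i))) := by
  set S := ⋃ i, support (g i)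
  have hS : MeasurableSet S := MeasurableSet.iUnion fun i => (hgm i).measurableSet_support
  let A : ι × ℕ → Set α := fun p => {x | 1 / ((p.2 : ℝ) + 1) ≤ ‖g p.1 x‖}
  refine Measure.sigmaFinite_of_countable ((countable_range A).insert Sᶜ) ?_ ?_
  · rintro _ (rfl | ⟨p, rfl⟩)
    · simp [Measure.restrict_apply hS.compl]
    · exact (Measure.restrict_apply_le _ _).trans_lt
        ((hgi p.1).measure_norm_ge_lt_top (by positivity))
  · refine eq_univ_of_forall fun x => ?_
    by_cases hx : x ∈ S
    · obtain ⟨i, hi⟩ := mem_iUnion.1 hx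
      obtain ⟨k, hk⟩ := exists_nat_one_div_lt (norm_pos_iff.2 hi)
      exact mem_sUnion.2 ⟨A (i, k), mem_insert_of_mem _ ⟨(i, k), rfl⟩, hk.le⟩
    · exact mem_sUnion.2 ⟨Sᶜ, mem_insert _ _, hx⟩

namespace L1

def measOn {α : Type*} (m : MeasurableSpace α) {m0 : MeasurableSpace α} (s : Set α)
    (μ : Measure[m0] α) : Submodule ℝ (α →₁[μ] ℝ) where
  carrier :=
    {f | ∃ g : α → ℝ, Measurable[m] g ∧ (∀ x ∉ s, g x = 0) ∧ (f : α → ℝ) =ᵐ[μ] g}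
  zero_mem' := ⟨0, measurable_const, fun _ _ => rfl, Lp.coeFn_zero ℝ 1 μ⟩
  add_mem' := by
    rintro f₁ f₂ ⟨g₁, hg₁, hg₁s, hfg₁⟩ ⟨g₂, hg₂, hg₂s, hfg₂⟩
    exact ⟨g₁ + g₂, hg₁.add hg₂, fun x hx => by simp [hg₁s x hx, hg₂s x hx],
      (Lp.coeFn_add f₁ f₂).trans (hfg₁.add hfg₂)⟩
  smul_mem' := by
    rintro c f ⟨g, hg, hgs, hfg⟩
    exact ⟨c • g, hg.const_smul c, fun x hx => by simp [hgs x hx],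
      (Lp.coeFn_smul c f).trans (hfg.const_smul c)⟩

variable {α : Type*} {m m0 : MeasurableSpace α} {μ : Measure[m0] α} {s : Set α}

theorem abs_mem_measOn {f : α →₁[μ] ℝ} (hf : f ∈ measOn m s μ) :
    |f| ∈ measOn m s μ := by
  obtain ⟨g, hg, hgs, hfg⟩ := hf
  exact ⟨fun x => |g x|, continuous_abs.measurable.comp hg, fun x hx => by simp [hgs x hx],
    (Lp.coeFn_abs f).trans (hfg.mono fun x hx => by simp [hx])⟩

section CondExpOn

variable (hm : m ≤ m0) (hs : MeasurableSet[m] s) [SigmaFinite ((μ.restrict s).trim hm)]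
include hm hs

noncomputable def condExpOn : (α →₁[μ] ℝ) →L[ℝ] α →₁[μ] ℝ :=
  (Lp.extendByZero ℝ (hm s hs)).toContinuousLinearMap ∘L
    condExpL1CLM ℝ hm (μ.restrict s) ∘L LpToLpRestrictCLM α ℝ ℝ μ 1 s

theorem norm_condExpOn_le : ‖condExpOn hm hs (μ := μ)‖ ≤ 1 := by
  have hC : ‖condExpL1CLM ℝ hm (μ.restrict s)‖ ≤ 1 :=
    L1.norm_setToL1_le (dominatedFinMeasAdditive_condExpInd ℝ hm (μ.restrict s)) zero_le_one
  have hR : ‖LpToLpRestrictCLM α ℝ ℝ μ 1 s‖ ≤ 1 :=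
    LinearMap.mkContinuous_norm_le _ zero_le_one _
  refine (ContinuousLinearMap.opNorm_comp_le _ _).trans
    (mul_le_one₀ (LinearIsometry.norm_toContinuousLinearMap_le _) (norm_nonneg _) ?_)
  exact (ContinuousLinearMap.opNorm_comp_le _ _).trans (mul_le_one₀ hC (norm_nonneg _) hR)

theorem coeFn_condExpOn (f : α →₁[μ] ℝ) :
    condExpOn hm hs f =ᵐ[μ]
      s.indicator (condExpL1CLM ℝ hm (μ.restrict s) (LpToLpRestrictCLM α ℝ ℝ μ 1 s f)) :=
  Lp.coeFn_extendByZero ℝ (hm s hs) _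

theorem condExpOn_mem_measOn (f : α →₁[μ] ℝ) : condExpOn hm hs f ∈ measOn m s μ := by
  obtain ⟨g, hg, hfg⟩ := aestronglyMeasurable_condExpL1CLM (hm := hm)
    (LpToLpRestrictCLM α ℝ ℝ μ 1 s f)
  exact ⟨s.indicator g, hg.measurable.indicator hs, fun x hx => indicator_of_notMem hx _,
    (coeFn_condExpOn hm hs f).trans
      ((ae_eq_restrict_iff_indicator_ae_eq (hm s hs)).1 hfg)⟩

theorem condExpOn_of_mem_measOn {f : α →₁[μ] ℝ} (hf : f ∈ measOn m s μ) :
    condExpOn hm hs f = f := by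
  obtain ⟨g, hg, hgs, hfg⟩ := hf
  have hfg_s : LpToLpRestrictCLM α ℝ ℝ μ 1 s f =ᵐ[μ.restrict s] g :=
    (LpToLpRestrictCLM_coeFn ℝ s f).trans (ae_restrict_of_ae hfg)
  have hfix : condExpL1CLM ℝ hm (μ.restrict s) (LpToLpRestrictCLM α ℝ ℝ μ 1 s f) =
      LpToLpRestrictCLM α ℝ ℝ μ 1 s f :=
    condExpL1CLM_of_aestronglyMeasurable' _ ⟨g, hg.stronglyMeasurable, hfg_s⟩
  refine Lp.ext ((coeFn_condExpOn hm hs f).trans ?_)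
  rw [hfix]
  calc s.indicator (LpToLpRestrictCLM α ℝ ℝ μ 1 s f) =ᵐ[μ] s.indicator g :=
        (ae_eq_restrict_iff_indicator_ae_eq (hm s hs)).1 hfg_s
    _ = g := indicator_eq_self.2 (support_subset_iff'.2 hgs)
    _ =ᵐ[μ] f := hfg.symm

theorem range_condExpOn : range (condExpOn hm hs (μ := μ)) = measOn m s μ :=
  Subset.antisymm (range_subset_iff.2 (condExpOn_mem_measOn hm hs))
    fun f hf => ⟨f, condExpOn_of_mem_measOn hm hs hf⟩

theorem isClosed_measOn : IsClosed (measOn m s μ : Set (α →₁[μ] ℝ)) := by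
  have : (measOn m s μ : Set (α →₁[μ] ℝ)) = {f | condExpOn hm hs f = f} :=
    Set.ext fun f =>
      ⟨condExpOn_of_mem_measOn hm hs, fun h => h ▸ condExpOn_mem_measOn hm hs f⟩
  exact this ▸ isClosed_eq (condExpOn hm hs).continuous continuous_id

theorem isSeparable_measOn [@MeasurableSpace.CountablyGenerated α m] :
    TopologicalSpace.IsSeparable (measOn m s μ : Set (α →₁[μ] ℝ)) := by
  let T : Lp ℝ 1 ((μ.restrict s).trim hm) → α →₁[μ] ℝ := fun h =>
    Lp.extendByZero ℝ (hm s hs) ((lpMeasToLpTrimLie ℝ ℝ 1 (μ.restrict s) hm).symm h : _)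
  have hT : Continuous T :=
    (Lp.extendByZero ℝ (hm s hs)).continuous.comp
      (continuous_subtype_val.comp (LinearIsometryEquiv.continuous _))
  -- `m` is not the ambient σ-algebra, so the instances have to be supplied by hand.
  have : SecondCountableTopology (Lp ℝ 1 ((μ.restrict s).trim hm)) :=
    @Lp.SecondCountableTopology α ℝ m _ _ _ _ ⟨ENNReal.one_ne_top⟩
      (@isSeparable_of_sigmaFinite α m _ _ _) _
  refine (isSeparable_range hT).mono fun f hf => ?_
  refine ⟨lpMeasToLpTrimLie ℝ ℝ 1 (μ.restrict s) hm ⟨_, aestronglyMeasurable_condExpL1CLM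
    (hm := hm) (LpToLpRestrictCLM α ℝ ℝ μ 1 s f)⟩, ?_⟩
  simpa [T, condExpOn] using condExpOn_of_mem_measOn hm hs hf

end CondExpOn

end L1

theorem L1.exists_measOn_superset_of_countable {α : Type*} [m0 : MeasurableSpace α]
    {μ : Measure α} {c : Set (α →₁[μ] ℝ)} (hc : c.Countable) :
    ∃ (m : MeasurableSpace α) (hm : m ≤ m0) (s : Set α),
      @MeasurableSpace.CountablyGenerated α m ∧ MeasurableSet[m] s ∧
        SigmaFinite ((μ.restrict s).trim hm) ∧ c ⊆ L1.measOn m s μ := by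
  have := hc.to_subtype
  let F : α → c → ℝ := fun x f => (f : α →₁[μ] ℝ) x
  have hF : Measurable F :=
    measurable_pi_lambda _ fun f => (Lp.stronglyMeasurable (f : α →₁[μ] ℝ)).measurable
  let m := MeasurableSpace.comap F inferInstance
  have hfm : ∀ f : c, StronglyMeasurable[m] (f : α → ℝ) := fun f =>
    ((measurable_pi_apply f).comp (comap_measurable F)).stronglyMeasurable
  let s := ⋃ f : c, support (f : α → ℝ)
  have hs : MeasurableSet[m] s := MeasurableSet.iUnion fun f => (hfm f).measurableSet_support
  refine ⟨m, hF.comap_le, s, .comap F, hs, ?_, fun f hf => ⟨f, (hfm ⟨f, hf⟩).measurable,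
    fun x hx => ?_, .rfl⟩⟩
  · rw [← restrict_trim hF.comap_le μ hs]
    exact sigmaFinite_restrict_iUnion_support hfm fun f =>
      (L1.integrable_coeFn _).trim hF.comap_le (hfm f)
  · by_contra h
    exact hx (mem_iUnion.2 ⟨⟨f, hf⟩, h⟩)

end MeasureTheory

theorem separable_subset_contained_in_countably_generated_sublattice_general
    {X : Type*} [m0 : MeasurableSpace X] (μ : Measure X)
    (M : Set (Lp ℝ 1 μ)) (hM : TopologicalSpace.IsSeparable M) :
    ∃ (Ω : Set X) (m : MeasurableSpace X),
      m ≤ m0 ∧ @MeasurableSpace.CountablyGenerated X m ∧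
      MeasurableSet[m] Ω ∧ SigmaFinite (μ.restrict Ω) ∧
      ∃ F : Submodule ℝ (Lp ℝ 1 μ),
        (F : Set (Lp ℝ 1 μ)) =
          {f : Lp ℝ 1 μ | ∃ g : X → ℝ, Measurable[m] g ∧ (∀ x ∉ Ω, g x = 0) ∧
            (f : X → ℝ) =ᵐ[μ] g} ∧
        M ⊆ (F : Set (Lp ℝ 1 μ)) ∧
        IsClosed (F : Set (Lp ℝ 1 μ)) ∧
        (∀ f ∈ F, |f| ∈ F) ∧
        TopologicalSpace.IsSeparable (F : Set (Lp ℝ 1 μ)) ∧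
        ∃ P : Lp ℝ 1 μ →L[ℝ] Lp ℝ 1 μ,
          ‖P‖ ≤ 1 ∧ Set.range P = (F : Set (Lp ℝ 1 μ)) ∧ ∀ f ∈ F, P f = f := by
  obtain ⟨c, hc, hMc⟩ := hM
  obtain ⟨m, hm, Ω, hCG, hΩ, hσ, hcF⟩ := L1.exists_measOn_superset_of_countable hc
  have hF := L1.isClosed_measOn (μ := μ) hm hΩ
  exact ⟨Ω, m, hm, hCG, hΩ, .of_trim hm, L1.measOn m Ω μ, rfl,
    hMc.trans (closure_minimal hcF hF), hF, fun _ => L1.abs_mem_measOn,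
    L1.isSeparable_measOn hm hΩ, L1.condExpOn hm hΩ, L1.norm_condExpOn_le hm hΩ,
    L1.range_condExpOn hm hΩ, fun _ => L1.condExpOn_of_mem_measOn hm hΩ⟩

/-- Every separable subset `M` of `L¹` over a strictly localizable measure
space is contained in an `L¹`-sublattice `F = L¹(Ω, Σ̃, μ)` associated with a σ-finite
measurable set `Ω` and a countably generated sub-σ-algebra `Σ̃`; moreover `F` is a separable
closed sublattice which is the range of a norm-one projection. -/
theorem separable_subset_contained_in_countably_generated_sublattice
    {X : Type*} [m0 : MeasurableSpace X] (μ : Measure X)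
    (hSL : StrictlyLocalizable μ)
    (M : Set (Lp ℝ 1 μ)) (hM : TopologicalSpace.IsSeparable M) :
    ∃ (Ω : Set X) (m : MeasurableSpace X),
      m ≤ m0 ∧ @MeasurableSpace.CountablyGenerated X m ∧
      MeasurableSet[m] Ω ∧ SigmaFinite (μ.restrict Ω) ∧
      ∃ F : Submodule ℝ (Lp ℝ 1 μ),
        (F : Set (Lp ℝ 1 μ)) =
          {f : Lp ℝ 1 μ | ∃ g : X → ℝ, Measurable[m] g ∧ (∀ x ∉ Ω, g x = 0) ∧
            (f : X → ℝ) =ᵐ[μ] g} ∧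
        M ⊆ (F : Set (Lp ℝ 1 μ)) ∧
        IsClosed (F : Set (Lp ℝ 1 μ)) ∧
        (∀ f ∈ F, |f| ∈ F) ∧
        TopologicalSpace.IsSeparable (F : Set (Lp ℝ 1 μ)) ∧
        ∃ P : Lp ℝ 1 μ →L[ℝ] Lp ℝ 1 μ,
          ‖P‖ ≤ 1 ∧ Set.range P = (F : Set (Lp ℝ 1 μ)) ∧ ∀ f ∈ F, P f = f :=
  separable_subset_contained_in_countably_generated_sublattice_general (m0 := m0) μ M hM
end

section
/- Let (X, Σ, μ) be a finite measure space and (Y, Γ, ν) a strictly localizable measure space with decomposition ((Y_j, Γ_j, ν))_{j∈J}. Then for any bounded linear operator T : L¹(X, Σ, μ) → L¹(Y, Γ, ν), there exists an at most countable subset J₀ ⊆ J such that the range of T is contained in the closed sublattice ⊕_{j∈J₀} L¹(Y_j, Γ_j, ν) (ℓ¹-direct sum). -/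
/-!
Restricting `T f` to the pieces gives operators `S j` with `∑ j ∈ t, ‖S j f‖ ≤ ‖T‖ * ‖f‖` for
every finite `t`. Splitting `X` along the sets `A j` one index at a time upgrades this to
`∑ j ∈ t, ‖S j 1_{A j}‖ ≤ ‖T‖ * μ X` for an arbitrary choice of one measurable set per index.
Since indicators span a dense subspace of `L¹(μ)`, each `S j ≠ 0` is nonzero on some indicator;
choosing one per index yields a summable family, so `S j = 0` for all but countably many `j`.
-/

open MeasureTheory

section IndicatorConstLp

variable {X : Type*} [MeasurableSpace X] {μ : Measure X}

theorem ContinuousLinearMap.eq_zero_of_map_indicatorConstLp {F : Type*} [NormedAddCommGroup F]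
    [NormedSpace ℝ F] (S : Lp ℝ 1 μ →L[ℝ] F)
    (hS : ∀ s (hs : MeasurableSet s) (hμs : μ s ≠ ⊤), S (indicatorConstLp 1 hs hμs 1) = 0) :
    S = 0 := by
  ext f
  induction f using Lp.induction ENNReal.one_ne_top with
  | indicatorConst c hs hμs =>
    have hc : indicatorConstLp 1 hs hμs.ne c = c • indicatorConstLp 1 hs hμs.ne (1 : ℝ) := by
      ext1
      filter_upwards [indicatorConstLp_coeFn (c := c),
        Lp.coeFn_smul c (indicatorConstLp 1 hs hμs.ne (1 : ℝ)),
        indicatorConstLp_coeFn (c := (1 : ℝ))] with x h1 h2 h3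
      rw [h1, h2, Pi.smul_apply, h3, ← Set.indicator_const_smul_apply, smul_eq_mul, mul_one]
    rw [Lp.simpleFunc.coe_indicatorConst, hc, map_smul, hS, smul_zero, zero_apply]
  | add _ _ _ hf hg => rw [map_add, hf, hg, map_add]
  | isClosed => exact isClosed_eq S.continuous (0 : Lp ℝ 1 μ →L[ℝ] F).continuous

variable [IsFiniteMeasure μ] {F : Type*} [NormedAddCommGroup F] [NormedSpace ℝ F]

theorem norm_map_indicatorConstLp_le_inter_add_sdiff (S : Lp ℝ 1 μ →L[ℝ] F) {s t : Set X}
    (hs : MeasurableSet s) (ht : MeasurableSet t) :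
    ‖S (indicatorConstLp 1 hs (measure_ne_top μ s) 1)‖ ≤
      ‖S (indicatorConstLp 1 (hs.inter ht) (measure_ne_top μ _) 1)‖ +
        ‖S (indicatorConstLp 1 (hs.diff ht) (measure_ne_top μ _) 1)‖ := by
  have hsplit := indicatorConstLp_disjoint_union (p := 1) (hs.inter ht) (hs.diff ht)
    (measure_ne_top μ _) (measure_ne_top μ _) Set.disjoint_sdiff_inter.symm (1 : ℝ)
  simp only [Set.inter_union_sdiff] at hsplit
  rw [hsplit, map_add]
  exact norm_add_le _ _

variable {J : Type*} {G : J → Type*} [∀ j, NormedAddCommGroup (G j)] [∀ j, NormedSpace ℝ (G j)]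
  {S : ∀ j, Lp ℝ 1 μ →L[ℝ] G j} {C : ℝ}

theorem sum_norm_map_indicatorConstLp_inter_add_sum_le
    (hS : ∀ (t : Finset J) (f : Lp ℝ 1 μ), ∑ j ∈ t, ‖S j f‖ ≤ C * ‖f‖)
    {A : J → Set X} (hA : ∀ j, MeasurableSet (A j)) (t : Finset J) :
    ∀ u : Finset J, Disjoint t u → ∀ {E : Set X} (hE : MeasurableSet E),
      ∑ j ∈ t, ‖S j (indicatorConstLp 1 (hE.inter (hA j)) (measure_ne_top μ _) 1)‖ +
        ∑ j ∈ u, ‖S j (indicatorConstLp 1 hE (measure_ne_top μ _) 1)‖ ≤ C * μ.real E := by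
  classical
  induction t using Finset.induction_on with
  | empty =>
    intro u _ E hE
    simpa [norm_indicatorConstLp] using hS u (indicatorConstLp 1 hE (measure_ne_top μ _) 1)
  | insert i t hi ih =>
    intro u htu E hE
    -- Split `E` along `A i`: the term of `i` is its `u`-term on the piece `E ∩ A i`, so `i` can
    -- move into `u` on both pieces.
    have hiu : i ∉ u := Finset.disjoint_insert_left.1 htu |>.1
    have htu' : Disjoint t (insert i u) :=
      Finset.disjoint_insert_right.2 ⟨hi, (Finset.disjoint_insert_left.1 htu).2⟩
    have h₁ := ih (insert i u) htu' (hE.inter (hA i))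
    have h₂ := ih (insert i u) htu' (hE.diff (hA i))
    rw [Finset.sum_insert hiu] at h₁ h₂
    rw [Finset.sum_insert hi]
    have hsplit_t : ∀ j, ‖S j (indicatorConstLp 1 (hE.inter (hA j)) (measure_ne_top μ _) 1)‖ ≤
        ‖S j (indicatorConstLp 1 ((hE.inter (hA i)).inter (hA j)) (measure_ne_top μ _) 1)‖ +
          ‖S j (indicatorConstLp 1 ((hE.diff (hA i)).inter (hA j)) (measure_ne_top μ _) 1)‖ := by
      intro j
      convert norm_map_indicatorConstLp_le_inter_add_sdiff (S j) (hE.inter (hA j)) (hA i)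
        using 5
      · exact Set.inter_right_comm _ _ _
      · exact Set.inter_sdiff_right_comm.symm
    have hsplit_u : ∀ j, ‖S j (indicatorConstLp 1 hE (measure_ne_top μ _) 1)‖ ≤
        ‖S j (indicatorConstLp 1 (hE.inter (hA i)) (measure_ne_top μ _) 1)‖ +
          ‖S j (indicatorConstLp 1 (hE.diff (hA i)) (measure_ne_top μ _) 1)‖ :=
      fun j => norm_map_indicatorConstLp_le_inter_add_sdiff (S j) hE (hA i)
    have hsum_t := Finset.sum_le_sum fun j (_ : j ∈ t) => hsplit_t j
    have hsum_u := Finset.sum_le_sum fun j (_ : j ∈ u) => hsplit_u j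
    rw [Finset.sum_add_distrib] at hsum_t hsum_u
    have hnonneg := norm_nonneg (S i (indicatorConstLp 1 (hE.diff (hA i)) (measure_ne_top μ _) 1))
    rw [← measureReal_inter_add_sdiff (μ := μ) (s := E) (hA i), mul_add]
    linarith

theorem sum_norm_map_indicatorConstLp_le
    (hS : ∀ (t : Finset J) (f : Lp ℝ 1 μ), ∑ j ∈ t, ‖S j f‖ ≤ C * ‖f‖)
    {A : J → Set X} (hA : ∀ j, MeasurableSet (A j)) (t : Finset J) :
    ∑ j ∈ t, ‖S j (indicatorConstLp 1 (hA j) (measure_ne_top μ _) 1)‖ ≤ C * μ.real Set.univ := by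
  simpa using sum_norm_map_indicatorConstLp_inter_add_sum_le hS hA t ∅
    (Finset.disjoint_empty_right t) MeasurableSet.univ

theorem countable_setOf_ne_zero_of_sum_norm_le
    (hS : ∀ (t : Finset J) (f : Lp ℝ 1 μ), ∑ j ∈ t, ‖S j f‖ ≤ C * ‖f‖) :
    {j | S j ≠ 0}.Countable := by
  have hwitness : ∀ j, ∃ A, ∃ hA : MeasurableSet A,
      S j ≠ 0 → S j (indicatorConstLp 1 hA (measure_ne_top μ A) 1) ≠ 0 := by
    intro j
    by_cases hj : S j = 0
    · exact ⟨∅, .empty, fun h => (h hj).elim⟩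
    · obtain ⟨A, hA, _, hne⟩ : ∃ A, ∃ (hA : MeasurableSet A) (hμA : μ A ≠ ⊤),
          S j (indicatorConstLp 1 hA hμA 1) ≠ 0 := by
        by_contra! h
        exact hj ((S j).eq_zero_of_map_indicatorConstLp h)
      exact ⟨A, hA, fun _ => hne⟩
  choose A hA hAS using hwitness
  have hsummable : Summable fun j => ‖S j (indicatorConstLp 1 (hA j) (measure_ne_top μ _) 1)‖ :=
    summable_of_sum_le (fun j => norm_nonneg _) (sum_norm_map_indicatorConstLp_le hS hA)
  exact hsummable.countable_support.mono fun j hj => norm_ne_zero_iff.2 (hAS j hj)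

end IndicatorConstLp

section Decomposition

variable {Y J : Type*} [MeasurableSpace Y] {ν : Measure Y} {Yj : J → Set Y}

theorem sum_norm_LpToLpRestrictCLM_le {E : Type*} [NormedAddCommGroup E] [NormedSpace ℝ E]
    (hmeas : ∀ j, MeasurableSet (Yj j)) (hdisj : Pairwise (Function.onFun Disjoint Yj))
    (g : Lp E 1 ν) (t : Finset J) :
    ∑ j ∈ t, ‖LpToLpRestrictCLM Y E ℝ ν 1 (Yj j) g‖ ≤ ‖g‖ := by
  have hnorm : ∀ j, ‖LpToLpRestrictCLM Y E ℝ ν 1 (Yj j) g‖ = ∫ y in Yj j, ‖g y‖ ∂ν := fun j =>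
    (L1.norm_eq_integral_norm _).trans
      (integral_congr_ae ((LpToLpRestrictCLM_coeFn ℝ (Yj j) g).fun_comp norm))
  have hint := (L1.integrable_coeFn g).norm
  rw [Finset.sum_congr rfl fun j _ => hnorm j, ← integral_biUnion_finset t (fun j _ => hmeas j)
    (fun i _ j _ hij => hdisj hij) (fun j _ => hint.integrableOn), L1.norm_eq_integral_norm]
  exact setIntegral_le_integral hint (.of_forall fun _ => norm_nonneg _)

theorem ae_eq_zero_of_notMem_biUnion {E : Type*} [NormedAddCommGroup E]
    (hmeas : ∀ j, MeasurableSet (Yj j)) (hν : ν = Measure.sum fun j => ν.restrict (Yj j))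
    {J₀ : Set J} (hJ₀ : J₀.Countable) {g : Y → E} (hg : AEStronglyMeasurable g ν)
    (hzero : ∀ j ∉ J₀, g =ᵐ[ν.restrict (Yj j)] 0) :
    ∀ᵐ y ∂ν, y ∉ ⋃ j ∈ J₀, Yj j → g y = 0 := by
  have hU : MeasurableSet (⋃ j ∈ J₀, Yj j) := .biUnion hJ₀ fun j _ => hmeas j
  obtain ⟨g', hg'_meas, hgg'⟩ := hg
  suffices h : ∀ᵐ y ∂ν, y ∉ ⋃ j ∈ J₀, Yj j → g' y = 0 by
    filter_upwards [h, hgg'] with y hy hgy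
    rwa [hgy]
  have hgg'_restrict : ∀ j, g =ᵐ[ν.restrict (Yj j)] g' := fun j => ae_restrict_of_ae hgg'
  rw [hν, Measure.ae_sum_iff' (hU.compl.imp
    (hg'_meas.measurableSet_eq_fun stronglyMeasurable_const))]
  intro j
  by_cases hj : j ∈ J₀
  · filter_upwards [ae_restrict_mem (hmeas j)] with y hy hyU
    exact absurd (Set.mem_biUnion hj hy) hyU
  · filter_upwards [hzero j hj, hgg'_restrict j] with y hy hgy _
    rw [← hgy, hy, Pi.zero_apply]

end Decomposition

theorem range_contained_in_countable_part_of_decomposition_general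
    {X Y : Type*} [MeasurableSpace X] [MeasurableSpace Y]
    (μ : Measure X) [IsFiniteMeasure μ] (ν : Measure Y)
    (J : Type) (Yj : J → Set Y)
    (hdisj : Pairwise (Function.onFun Disjoint Yj))
    (hmeas : ∀ j, MeasurableSet (Yj j) ∧ ν (Yj j) < ⊤)
    (hadd : ∀ A : Set Y, MeasurableSet A → ν A = ∑' j, ν (A ∩ Yj j))
    (T : Lp ℝ 1 μ →L[ℝ] Lp ℝ 1 ν) :
    ∃ J₀ : Set J, J₀.Countable ∧
      ∀ f : Lp ℝ 1 μ, ∀ᵐ y ∂ν, y ∉ (⋃ j ∈ J₀, Yj j) → (T f : Y → ℝ) y = 0 := by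
  set S : ∀ j, Lp ℝ 1 μ →L[ℝ] Lp ℝ 1 (ν.restrict (Yj j)) :=
    fun j => (LpToLpRestrictCLM Y ℝ ℝ ν 1 (Yj j)).comp T
  have hS : ∀ (t : Finset J) f, ∑ j ∈ t, ‖S j f‖ ≤ ‖T‖ * ‖f‖ := fun t f =>
    (sum_norm_LpToLpRestrictCLM_le (fun j => (hmeas j).1) hdisj (T f) t).trans (T.le_opNorm f)
  have hν : ν = Measure.sum fun j => ν.restrict (Yj j) := by
    ext A hA
    rw [Measure.sum_apply _ hA, hadd A hA]
    exact tsum_congr fun j => (Measure.restrict_apply hA).symm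
  refine ⟨{j | S j ≠ 0}, countable_setOf_ne_zero_of_sum_norm_le hS, fun f => ?_⟩
  refine ae_eq_zero_of_notMem_biUnion (fun j => (hmeas j).1) hν
    (countable_setOf_ne_zero_of_sum_norm_le hS) (Lp.aestronglyMeasurable _) fun j hj => ?_
  have hSj : S j f = 0 := by rw [not_not.1 hj, zero_apply]
  exact (LpToLpRestrictCLM_coeFn ℝ (Yj j) (T f)).symm.trans (hSj ▸ Lp.coeFn_zero _ _ _)

/-- Let `μ` be a finite measure and `ν` a strictly localizable measure with
decomposition `(Y_j)_{j ∈ J}`. Then every bounded operator `T : L¹(μ) → L¹(ν)` has range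
contained (a.e.) in the ℓ¹-direct sum of the bands `L¹(Y_j)` over an at most countable
subset `J₀ ⊆ J`; that is, every `T f` vanishes a.e. outside `⋃_{j ∈ J₀} Y_j`. -/
theorem range_contained_in_countable_part_of_decomposition
    {X Y : Type*} [MeasurableSpace X] [MeasurableSpace Y]
    (μ : Measure X) [IsFiniteMeasure μ] (ν : Measure Y)
    (J : Type) (Yj : J → Set Y)
    (hdisj : Pairwise (Function.onFun Disjoint Yj))
    (hcover : (⋃ j, Yj j) = Set.univ)
    (hmeas : ∀ j, MeasurableSet (Yj j) ∧ ν (Yj j) < ⊤)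
    (hloc : ∀ A : Set Y, (∀ j, MeasurableSet (A ∩ Yj j)) → MeasurableSet A)
    (hadd : ∀ A : Set Y, MeasurableSet A → ν A = ∑' j, ν (A ∩ Yj j))
    (T : Lp ℝ 1 μ →L[ℝ] Lp ℝ 1 ν) :
    ∃ J₀ : Set J, J₀.Countable ∧
      ∀ f : Lp ℝ 1 μ, ∀ᵐ y ∂ν, y ∉ (⋃ j ∈ J₀, Yj j) → (T f : Y → ℝ) y = 0 :=
  range_contained_in_countable_part_of_decomposition_general μ ν J Yj hdisj hmeas hadd T
end

section
/- Let E be a Banach space and (x_n) a weakly convergent sequence in E. Then there exist a strictly increasing sequence of natural numbers (i_n) and scalars (α_i) such that Σ_{i=i_n+1}^{i_{n+1}} |α_i| = 1 for every n, and the sequence x'_n := Σ_{i=i_n+1}^{i_{n+1}} α_i x_i converges to 0 in norm. -/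
open Filter Topology

private lemma aux_convex_approx
    {E : Type*} [NormedAddCommGroup E] [NormedSpace ℝ E]
    (x : ℕ → E) (x₀ : E)
    (hweak : ∀ φ : E →L[ℝ] ℝ, Tendsto (fun n => φ (x n)) atTop (𝓝 (φ x₀)))
    (N : ℕ) {ε : ℝ} (hε : 0 < ε) :
    ∃ (M : ℕ) (w : ℕ → ℝ), N < M ∧ (∀ k, 0 ≤ w k) ∧
      ∑ k ∈ Finset.Ioc N M, w k = 1 ∧
      ‖(∑ k ∈ Finset.Ioc N M, w k • x k) - x₀‖ < ε := by
  have hmem : x₀ ∈ closure (convexHull ℝ (x '' Set.Ici (N + 1))) := by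
    by_contra h
    obtain ⟨f, u, hfu, hux⟩ := geometric_hahn_banach_closed_point
      ((convex_convexHull ℝ _).closure) isClosed_closure h
    have hev : ∀ᶠ n in atTop, f (x n) ≤ u := by
      filter_upwards [eventually_ge_atTop (N + 1)] with n hn
      exact (hfu _ (subset_closure (subset_convexHull ℝ _ ⟨n, hn, rfl⟩))).le
    have := le_of_tendsto (hweak f) hev
    linarith
  rw [Metric.mem_closure_iff] at hmem
  obtain ⟨y, hy, hdist⟩ := hmem ε hε
  rw [convexHull_eq] at hy
  obtain ⟨ι, t, w, z, hw0, hw1, hz, hcm⟩ := hy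
  have hzk : ∀ i : ι, ∃ m : ℕ, i ∈ t → (N + 1 ≤ m ∧ x m = z i) := by
    intro i
    by_cases hi : i ∈ t
    · obtain ⟨m, hm, hxm⟩ := hz i hi
      exact ⟨m, fun _ => ⟨hm, hxm⟩⟩
    · exact ⟨N + 1, fun h => absurd h hi⟩
  choose k hk using hzk
  set M : ℕ := max (N + 1) (t.sup k) with hM
  have hmaps : ∀ i ∈ t, k i ∈ Finset.Ioc N M := by
    intro i hi
    refine Finset.mem_Ioc.2 ⟨lt_of_lt_of_le (Nat.lt_succ_self N) (hk i hi).1, ?_⟩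
    exact le_trans (Finset.le_sup hi) (le_max_right _ _)
  refine ⟨M, fun j => ∑ i ∈ t.filter (fun i => k i = j), w i,
    lt_of_lt_of_le (Nat.lt_succ_self N) (le_max_left _ _),
    fun j => Finset.sum_nonneg fun i hi => hw0 i (Finset.mem_filter.1 hi).1, ?_, ?_⟩
  · rw [Finset.sum_fiberwise_of_maps_to hmaps w, hw1]
  · have hsum : (∑ j ∈ Finset.Ioc N M, (∑ i ∈ t.filter (fun i => k i = j), w i) • x j)
        = ∑ i ∈ t, w i • z i := by
      rw [← Finset.sum_fiberwise_of_maps_to hmaps (fun i => w i • z i)]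
      refine Finset.sum_congr rfl fun j _ => ?_
      rw [Finset.sum_smul]
      refine Finset.sum_congr rfl fun i hi => ?_
      rw [Finset.mem_filter] at hi
      rw [← (hk i hi.1).2, hi.2]
    rw [hsum, ← Finset.centerMass_eq_of_sum_1 t z hw1, hcm, ← dist_eq_norm]
    rw [dist_comm]
    exact hdist

private lemma aux_signed_block
    {E : Type*} [NormedAddCommGroup E] [NormedSpace ℝ E]
    (x : ℕ → E) (x₀ : E)
    (hweak : ∀ φ : E →L[ℝ] ℝ, Tendsto (fun n => φ (x n)) atTop (𝓝 (φ x₀)))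
    (N : ℕ) {ε : ℝ} (hε : 0 < ε) :
    ∃ (M : ℕ) (α : ℕ → ℝ), N < M ∧
      ∑ k ∈ Finset.Ioc N M, |α k| = 1 ∧
      ‖∑ k ∈ Finset.Ioc N M, α k • x k‖ < ε := by
  obtain ⟨M₁, w₁, hNM₁, hw₁0, hw₁1, hw₁⟩ := aux_convex_approx x x₀ hweak N (half_pos hε)
  obtain ⟨M₂, w₂, hM₁₂, hw₂0, hw₂1, hw₂⟩ := aux_convex_approx x x₀ hweak M₁ (half_pos hε)
  refine ⟨M₂, fun k => if k ≤ M₁ then w₁ k / 2 else -(w₂ k) / 2,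
    lt_trans hNM₁ hM₁₂, ?_, ?_⟩
  · rw [← Finset.sum_Ioc_consecutive _ hNM₁.le hM₁₂.le]
    have h1 : ∑ k ∈ Finset.Ioc N M₁,
        |if k ≤ M₁ then w₁ k / 2 else -(w₂ k) / 2| = 1 / 2 := by
      rw [show (1 : ℝ) / 2 = (∑ k ∈ Finset.Ioc N M₁, w₁ k) / 2 by rw [hw₁1],
        Finset.sum_div]
      refine Finset.sum_congr rfl fun kk hkk => ?_
      rw [if_pos (Finset.mem_Ioc.1 hkk).2, abs_of_nonneg (by have := hw₁0 kk; linarith)]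
    have h2 : ∑ k ∈ Finset.Ioc M₁ M₂,
        |if k ≤ M₁ then w₁ k / 2 else -(w₂ k) / 2| = 1 / 2 := by
      rw [show (1 : ℝ) / 2 = (∑ k ∈ Finset.Ioc M₁ M₂, w₂ k) / 2 by rw [hw₂1],
        Finset.sum_div]
      refine Finset.sum_congr rfl fun kk hkk => ?_
      rw [if_neg (not_le.2 (Finset.mem_Ioc.1 hkk).1)]
      rw [neg_div, abs_neg, abs_of_nonneg (by have := hw₂0 kk; linarith)]
    rw [h1, h2]; norm_num
  · rw [← Finset.sum_Ioc_consecutive _ hNM₁.le hM₁₂.le]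
    have h1 : ∑ k ∈ Finset.Ioc N M₁,
        (if k ≤ M₁ then w₁ k / 2 else -(w₂ k) / 2) • x k
        = (2⁻¹ : ℝ) • ∑ k ∈ Finset.Ioc N M₁, w₁ k • x k := by
      rw [Finset.smul_sum]
      refine Finset.sum_congr rfl fun kk hkk => ?_
      rw [if_pos (Finset.mem_Ioc.1 hkk).2, smul_smul]
      ring_nf
    have h2 : ∑ k ∈ Finset.Ioc M₁ M₂,
        (if k ≤ M₁ then w₁ k / 2 else -(w₂ k) / 2) • x k
        = -((2⁻¹ : ℝ) • ∑ k ∈ Finset.Ioc M₁ M₂, w₂ k • x k) := by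
      rw [← neg_smul, Finset.smul_sum]
      refine Finset.sum_congr rfl fun kk hkk => ?_
      rw [if_neg (not_le.2 (Finset.mem_Ioc.1 hkk).1), smul_smul]
      congr 1
      ring
    rw [h1, h2]
    have : (2⁻¹ : ℝ) • (∑ k ∈ Finset.Ioc N M₁, w₁ k • x k)
        + -((2⁻¹ : ℝ) • ∑ k ∈ Finset.Ioc M₁ M₂, w₂ k • x k)
        = (2⁻¹ : ℝ) • (((∑ k ∈ Finset.Ioc N M₁, w₁ k • x k) - x₀)
          - ((∑ k ∈ Finset.Ioc M₁ M₂, w₂ k • x k) - x₀)) := by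
      rw [smul_sub, smul_sub, smul_sub]; abel
    rw [this, norm_smul]
    have hle : ‖((∑ k ∈ Finset.Ioc N M₁, w₁ k • x k) - x₀)
        - ((∑ k ∈ Finset.Ioc M₁ M₂, w₂ k • x k) - x₀)‖ < ε :=
      lt_of_le_of_lt (norm_sub_le _ _) (by linarith)
    have h2norm : ‖(2⁻¹ : ℝ)‖ = 2⁻¹ := by norm_num
    rw [h2norm]
    have hnn := norm_nonneg (((∑ k ∈ Finset.Ioc N M₁, w₁ k • x k) - x₀)
        - ((∑ k ∈ Finset.Ioc M₁ M₂, w₂ k • x k) - x₀))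
    linarith
    
/-- If `(x_n)` is a weakly convergent sequence in a Banach space, then there
exist a strictly increasing sequence of indices `(i_n)` and scalars `(α_i)` with
`∑_{i = i_n + 1}^{i_{n+1}} |α_i| = 1` for every `n`, such that the blocks
`x'_n = ∑_{i = i_n + 1}^{i_{n+1}} α_i x_i` converge to `0` in norm. -/
theorem exists_signed_convex_blocks_norm_null
    {E : Type*} [NormedAddCommGroup E] [NormedSpace ℝ E] [CompleteSpace E]
    (x : ℕ → E) (x₀ : E)
    (hweak : ∀ φ : E →L[ℝ] ℝ, Tendsto (fun n => φ (x n)) atTop (𝓝 (φ x₀))) :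
    ∃ (i : ℕ → ℕ) (α : ℕ → ℝ), StrictMono i ∧
      (∀ n, ∑ k ∈ Finset.Ioc (i n) (i (n + 1)), |α k| = 1) ∧
      Tendsto (fun n => ‖∑ k ∈ Finset.Ioc (i n) (i (n + 1)), α k • x k‖) atTop (𝓝 0) := by
  have key : ∀ N n : ℕ, ∃ p : ℕ × (ℕ → ℝ), N < p.1 ∧
      ∑ k ∈ Finset.Ioc N p.1, |p.2 k| = 1 ∧
      ‖∑ k ∈ Finset.Ioc N p.1, p.2 k • x k‖ < 1 / (n + 1) := by
    intro N n
    obtain ⟨M, α, h1, h2, h3⟩ := aux_signed_block x x₀ hweak N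
      (show (0 : ℝ) < 1 / (n + 1) by positivity)
    exact ⟨(M, α), h1, h2, h3⟩
  choose F hF1 hF2 hF3 using key
  set P : ℕ → ℕ × (ℕ → ℝ) :=
    fun n => Nat.rec ((0 : ℕ), fun _ => (0 : ℝ)) (fun n p => F p.1 n) n with hP
  set i : ℕ → ℕ := fun n => (P n).1 with hi
  set g : ℕ → ℕ → ℝ := fun n => (P (n + 1)).2 with hg
  have hPsucc : ∀ n, P (n + 1) = F (P n).1 n := fun n => rfl
  have himono : StrictMono i := by
    apply strictMono_nat_of_lt_succ
    intro n
    exact hF1 (P n).1 n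
  have hblock_sum : ∀ n, ∑ k ∈ Finset.Ioc (i n) (i (n + 1)), |g n k| = 1 := by
    intro n
    exact hF2 (P n).1 n
  have hblock_norm : ∀ n, ‖∑ k ∈ Finset.Ioc (i n) (i (n + 1)), g n k • x k‖ < 1 / (n + 1) := by
    intro n
    exact hF3 (P n).1 n
  set α : ℕ → ℝ :=
    fun kk => ∑ n ∈ Finset.range kk, if i n < kk ∧ kk ≤ i (n + 1) then g n kk else 0 with hα
  have hαeq : ∀ n, ∀ kk ∈ Finset.Ioc (i n) (i (n + 1)), α kk = g n kk := by
    intro n kk hkk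
    rw [Finset.mem_Ioc] at hkk
    have hn_mem : n ∈ Finset.range kk :=
      Finset.mem_range.2 (lt_of_le_of_lt himono.le_apply hkk.1)
    simp only [hα]
    rw [Finset.sum_eq_single_of_mem n hn_mem, if_pos hkk]
    intro m _ hmn
    rcases lt_or_gt_of_ne hmn with hlt | hgt
    · have : i (m + 1) ≤ i n := himono.monotone (Nat.succ_le_of_lt hlt)
      rw [if_neg]
      push_neg
      intro _
      omega
    · have : i (n + 1) ≤ i m := himono.monotone hgt
      rw [if_neg]
      push_neg
      intro h
      omega
  refine ⟨i, α, himono, ?_, ?_⟩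
  · intro n
    rw [Finset.sum_congr rfl fun kk hkk => by rw [hαeq n kk hkk]]
    exact hblock_sum n
  · apply squeeze_zero (fun n => norm_nonneg _)
      (fun n => ?_) tendsto_one_div_add_atTop_nhds_zero_nat
    rw [Finset.sum_congr rfl fun kk hkk => by rw [hαeq n kk hkk]]
    exact (hblock_norm n).le
end

section
/- Let A be a subset of a Banach space E and define the De Blasi measure of weak noncompactness ω(A) = inf { ε > 0 : A ⊆ D + εB_E for some weakly compact D ⊆ E }. If T : E → F, U : F → ℓ¹, V : ℓ¹ → E are bounded operators with UTV = I_{ℓ¹}, then ω(T B_E) ≥ ‖U‖⁻¹ ‖V‖⁻¹. -/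
open Pointwise

/-- The De Blasi measure of weak noncompactness of a subset `A` of a Banach space:
the infimum of all `ε > 0` such that `A ⊆ D + ε B_E` for some weakly compact set `D`. -/
noncomputable def deBlasi {E : Type*} [NormedAddCommGroup E] [NormedSpace ℝ E]
    (A : Set E) : ℝ :=
  sInf {ε : ℝ | 0 < ε ∧ ∃ D : Set E, IsCompact (toWeakSpace ℝ E '' D) ∧
    A ⊆ D + ε • Metric.closedBall (0 : E) 1}

/-!
If every unit vector `eₙ` of `ℓ¹` lies within `δ < 1` of a weakly compact set `K`, pick
`kₙ ∈ K` with `‖eₙ - kₙ‖ ≤ δ` and a weak cluster point `w` of `(kₙ)`. The tail functional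
`φ_N x = ∑_{k ≥ N} x k` has norm at most `1` and `φ_N eₙ = 1` for `n ≥ N`, so `φ_N kₙ ≥ 1 - δ`
eventually; but `φ_N w → 0` as `N → ∞` and `φ_N kₙ` is frequently close to `φ_N w`.

Given `T B_E ⊆ D + ε B_F`, the operator `S = ‖V‖ U` maps `D` to a weakly compact set and
`eₙ = S (T (‖V‖⁻¹ V eₙ))`, so every `eₙ` lies within `‖S‖ ε = ‖U‖ ‖V‖ ε` of `S D`; hence
`‖U‖ ‖V‖ ε ≥ 1`.
-/

open Filter Metric Set Topology

local notation "ℓ¹" => lp (fun _ : ℕ => ℝ) 1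

section WeakApproximation

variable {E F : Type*} [NormedAddCommGroup E] [NormedSpace ℝ E]
  [NormedAddCommGroup F] [NormedSpace ℝ F]

theorem IsCompact.toWeakSpace_image_image {D : Set E} (hD : IsCompact (toWeakSpace ℝ E '' D))
    (S : E →L[ℝ] F) : IsCompact (toWeakSpace ℝ F '' (S '' D)) := by
  have h := hD.image (WeakSpace.map S).continuous
  rw [image_image] at h ⊢
  exact h

theorem IsCompact.exists_forall_mapClusterPt_dual {D : Set E}
    (hD : IsCompact (toWeakSpace ℝ E '' D)) {ι : Type*} {l : Filter ι} [l.NeBot] {u : ι → E}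
    (hu : ∀ i, u i ∈ D) :
    ∃ w ∈ D, ∀ f : StrongDual ℝ E, MapClusterPt (f w) l (fun i => f (u i)) := by
  obtain ⟨_, ⟨w, hwD, rfl⟩, hw⟩ := hD.exists_mapClusterPt (f := l) (u := toWeakSpace ℝ E ∘ u)
    (le_principal_iff.2 <| mem_map.2 <| Eventually.of_forall fun i => mem_image_of_mem _ (hu i))
  exact ⟨w, hwD, fun f =>
    hw.continuousAt_comp (f := fun z : WeakSpace ℝ E => f ((toWeakSpace ℝ E).symm z))
      (WeakBilin.eval_continuous (topDualPairing ℝ E).flip f).continuousAt⟩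

theorem mem_add_smul_unitClosedBall_iff {D : Set E} {ε : ℝ} (hε : 0 ≤ ε) {x : E} :
    x ∈ D + ε • closedBall (0 : E) 1 ↔ ∃ d ∈ D, ‖x - d‖ ≤ ε := by
  simp only [smul_unitClosedBall_of_nonneg hε, Set.mem_add, mem_closedBall_zero_iff]
  constructor
  · rintro ⟨d, hd, y, hy, rfl⟩
    exact ⟨d, hd, by simpa using hy⟩
  · rintro ⟨d, hd, hxd⟩
    exact ⟨d, hd, x - d, hxd, add_sub_cancel d x⟩

theorem exists_mem_image_norm_sub_le_of_subset_add {A D : Set E} {ε : ℝ} (hε : 0 ≤ ε)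
    (hAD : A ⊆ D + ε • closedBall (0 : E) 1) (S : E →L[ℝ] F) {a : E} (ha : a ∈ A) :
    ∃ k ∈ S '' D, ‖S a - k‖ ≤ ‖S‖ * ε := by
  obtain ⟨d, hd, had⟩ := (mem_add_smul_unitClosedBall_iff hε).1 (hAD ha)
  refine ⟨S d, mem_image_of_mem S hd, ?_⟩
  rw [← map_sub]
  exact S.le_opNorm_of_le had

end WeakApproximation

section DeBlasi

variable {E : Type*} [NormedAddCommGroup E] [NormedSpace ℝ E]

theorem deBlasi_nonneg (A : Set E) : 0 ≤ deBlasi A :=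
  Real.sInf_nonneg fun _ hε => hε.1.le

theorem le_deBlasi {A : Set E} (hA : Bornology.IsBounded A) {c : ℝ}
    (h : ∀ ε > 0, ∀ D : Set E, IsCompact (toWeakSpace ℝ E '' D) →
      A ⊆ D + ε • closedBall (0 : E) 1 → c ≤ ε) :
    c ≤ deBlasi A := by
  obtain ⟨r, hr⟩ := hA.subset_closedBall 0
  refine le_csInf ⟨max r 1, by positivity, {0}, by simp, fun x hx => ?_⟩
    fun ε ⟨hε, D, hD, hAD⟩ => h ε hε D hD hAD
  refine (mem_add_smul_unitClosedBall_iff (by positivity)).2 ⟨0, rfl, ?_⟩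
  simpa using (mem_closedBall_zero_iff.1 (hr hx)).trans (le_max_left r 1)

end DeBlasi

section TailSum

theorem lp.summable_norm_one {α : Type*} {E : α → Type*} [∀ i, NormedAddCommGroup (E i)]
    (x : lp E 1) : Summable fun i => ‖x i‖ := by
  simpa using (lp.memℓp x).summable (by norm_num)

theorem lp.tsum_norm_one {α : Type*} {E : α → Type*} [∀ i, NormedAddCommGroup (E i)]
    (x : lp E 1) : ∑' i, ‖x i‖ = ‖x‖ := by
  simpa using (lp.hasSum_norm (p := 1) (by norm_num) x).tsum_eq

theorem lp.norm_tsum_nat_add_le {E : Type*} [NormedAddCommGroup E] (K : ℕ)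
    (x : lp (fun _ : ℕ => E) 1) : ‖∑' k, x (k + K)‖ ≤ ‖x‖ := by
  have hK : Summable fun k => ‖x (k + K)‖ := (summable_nat_add_iff K).2 (lp.summable_norm_one x)
  calc ‖∑' k, x (k + K)‖ ≤ ∑' k, ‖x (k + K)‖ := norm_tsum_le_tsum_norm hK
    _ ≤ ∑' k, ‖x k‖ := hK.tsum_le_tsum_of_inj (· + K) (add_left_injective K)
        (fun _ _ => norm_nonneg _) (fun _ => le_rfl) (lp.summable_norm_one x)
    _ = ‖x‖ := lp.tsum_norm_one x

noncomputable def tailSum (K : ℕ) : StrongDual ℝ ℓ¹ :=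
  LinearMap.mkContinuous
    { toFun := fun x => ∑' k, x (k + K)
      map_add' := fun x y => by
        have hx := (summable_nat_add_iff K).2 (lp.summable_norm_one x).of_norm
        have hy := (summable_nat_add_iff K).2 (lp.summable_norm_one y).of_norm
        simpa using hx.tsum_add hy
      map_smul' := fun c x => by simpa using tsum_mul_left }
    1 fun x => by simpa using lp.norm_tsum_nat_add_le K x

theorem tailSum_apply (K : ℕ) (x : ℓ¹) : tailSum K x = ∑' k, x (k + K) := rfl

theorem tailSum_single {K n : ℕ} (h : K ≤ n) : tailSum K (lp.single 1 n 1) = 1 := by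
  obtain ⟨m, rfl⟩ := Nat.exists_eq_add_of_le' h
  simp [tailSum_apply, Pi.single_apply]

end TailSum

theorem one_le_of_forall_exists_norm_single_sub_le {K : Set ℓ¹}
    (hK : IsCompact (toWeakSpace ℝ ℓ¹ '' K)) {δ : ℝ}
    (h : ∀ n, ∃ k ∈ K, ‖lp.single 1 n 1 - k‖ ≤ δ) : 1 ≤ δ := by
  by_contra! hδ
  choose k hkK hk using h
  obtain ⟨w, -, hw⟩ := hK.exists_forall_mapClusterPt_dual (l := atTop) hkK
  set η := (1 - δ) / 2 with hη_def
  have hη : 0 < η := by linarith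
  obtain ⟨N, hN⟩ :=
    ((tendsto_sum_nat_add fun j => w j).eventually (ball_mem_nhds 0 hη)).exists
  rw [Real.dist_0_eq_abs, ← tailSum_apply] at hN
  have hlower : ∀ n ≥ N, 1 - δ ≤ tailSum N (k n) := fun n hn => by
    have h := (Real.le_norm_self _).trans ((lp.norm_tsum_nat_add_le N _).trans (hk n))
    rw [← tailSum_apply, map_sub, tailSum_single hn] at h
    linarith
  obtain ⟨n, hnw, hnN⟩ := ((mapClusterPt_iff_frequently.1 (hw (tailSum N)) _
    (ball_mem_nhds _ hη)).and_eventually (eventually_ge_atTop N)).exists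
  rw [mem_ball, Real.dist_eq] at hnw
  linarith [hlower n hnN, abs_lt.1 hnw, abs_lt.1 hN, hη_def]

theorem deBlasi_ge_of_factorization_general
    {E F : Type*} [NormedAddCommGroup E] [NormedSpace ℝ E]
    [NormedAddCommGroup F] [NormedSpace ℝ F]
    (T : E →L[ℝ] F) (U : F →L[ℝ] lp (fun _ : ℕ => ℝ) 1)
    (V : lp (fun _ : ℕ => ℝ) 1 →L[ℝ] E)
    (hUTV : U.comp (T.comp V) = ContinuousLinearMap.id ℝ (lp (fun _ : ℕ => ℝ) 1)) :
    ‖U‖⁻¹ * ‖V‖⁻¹ ≤ deBlasi (T '' Metric.closedBall (0 : E) 1) := by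
  rcases eq_or_ne ‖V‖ 0 with hV | hV
  · simpa [hV] using deBlasi_nonneg _
  refine le_deBlasi (T.lipschitz.isBounded_image isBounded_closedBall) fun ε hε D hD hTD => ?_
  set S := ‖V‖ • U
  have hsingle : ∀ n, ∃ k ∈ S '' D, ‖lp.single 1 n 1 - k‖ ≤ ‖S‖ * ε := fun n => by
    set x : ℓ¹ := lp.single 1 n 1
    have hx : ‖x‖ = 1 := (lp.norm_single (by norm_num) n 1).trans norm_one
    have hVx : ‖V‖⁻¹ • V x ∈ closedBall 0 1 := by
      rw [mem_closedBall_zero_iff, norm_smul, norm_inv, norm_norm]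
      exact inv_mul_le_one_of_le₀ (V.unit_le_opNorm x hx.le) (norm_nonneg _)
    have hSx : S (T (‖V‖⁻¹ • V x)) = x := by
      simpa [S, inv_smul_smul₀ hV] using congrArg (· x) hUTV
    exact hSx ▸ exists_mem_image_norm_sub_le_of_subset_add hε.le hTD S (mem_image_of_mem T hVx)
  have h := one_le_of_forall_exists_norm_single_sub_le (hD.toWeakSpace_image_image S) hsingle
  rw [norm_smul, norm_norm] at h
  have hUV : 0 < ‖V‖ * ‖U‖ := pos_of_mul_pos_left (one_pos.trans_le h) hε.le
  rwa [← mul_inv, mul_comm, inv_le_iff_one_le_mul₀ hUV, mul_comm]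

/-- If the identity of `ℓ¹` factors as `U T V` through `T : E → F`, then the
De Blasi measure of weak noncompactness of `T B_E` is at least `‖U‖⁻¹ ‖V‖⁻¹`. -/
theorem deBlasi_ge_of_factorization
    {E F : Type*} [NormedAddCommGroup E] [NormedSpace ℝ E] [CompleteSpace E]
    [NormedAddCommGroup F] [NormedSpace ℝ F] [CompleteSpace F]
    (T : E →L[ℝ] F) (U : F →L[ℝ] lp (fun _ : ℕ => ℝ) 1)
    (V : lp (fun _ : ℕ => ℝ) 1 →L[ℝ] E)
    (hUTV : U.comp (T.comp V) = ContinuousLinearMap.id ℝ (lp (fun _ : ℕ => ℝ) 1)) :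
    ‖U‖⁻¹ * ‖V‖⁻¹ ≤ deBlasi (T '' Metric.closedBall (0 : E) 1) :=
  deBlasi_ge_of_factorization_general T U V hUTV
end

section
/- Let E be a Banach space with a subset M ⊆ B_{E*} that is 1-norming (‖x‖ = sup_{x* ∈ M} |x*(x)| for all x ∈ E) and weak* sequentially compact. Suppose (u_n) ⊆ B_E and (u_n*) ⊆ M satisfy, for a fixed 0 < δ < 1/4: u_n*(u_n) ≥ 1 − δ for all n, (u_n*) converges weak* , and |u_n*(Σ_{m≠n} a_m u_m)| ≤ δ for all (a_m) ∈ B_{c₀} and all n. Define w_n = u_{2n} − u_{2n−1}, w_n* = (u_{2n}* − u_{2n−1}*)/2, J : c₀ → E by (a_n) ↦ Σ a_n w_n, and Q : E → c₀ by x ↦ (w_n*(x)). Then ‖I_{c₀} − QJ‖ ≤ 2δ, and hence there exists R : c₀ → c₀ with ‖R‖ ≤ (1 − 2δ)⁻¹ and R Q J = I_{c₀}. -/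
/-!
Testing the almost-biorthogonality condition on sign vectors shows that for every `k` the
off-diagonal values `u_k*(u_m)`, `m ≠ k`, are absolutely summable with sum at most `δ`.
Applying `u_{2n+2}*` and `u_{2n+1}*` to `J a = Σ a_n (u_{2n+2} - u_{2n+1})` therefore recovers
`a_n u_{2n+2}*(u_{2n+2})` and `-a_n u_{2n+1}*(u_{2n+1})` up to `δ‖a‖` each; as both diagonal
values lie in `[1 - δ, 1]`, averaging gives `|a_n - (Q J a)_n| ≤ 2δ‖a‖`. Since `2δ < 1`, the
Neumann series `Σ (I - Q J)^k` is a left inverse of `Q J` of norm at most `(1 - 2δ)⁻¹`.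
-/

open Filter Topology
open scoped ZeroAtInfty

/-- The `n`-th canonical basis vector of `c₀ = C₀(ℕ, ℝ)`. -/
noncomputable def eSeq (n : ℕ) : C₀(ℕ, ℝ) where
  toFun := fun m => if m = n then (1 : ℝ) else 0
  continuous_toFun := continuous_of_discreteTopology
  zero_at_infty' := by
    refine Filter.Tendsto.congr' ?_ tendsto_const_nhds
    filter_upwards [Filter.mem_cocompact.mpr ⟨{n}, isCompact_singleton, subset_rfl⟩] with m hm
    simp only [Set.mem_compl_iff, Set.mem_singleton_iff] at hm
    simp [hm]

open Finset

namespace ZeroAtInftyContinuousMap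

theorem abs_apply_le_norm (f : C₀(ℕ, ℝ)) (n : ℕ) : |f n| ≤ ‖f‖ := by
  have h := f.toBCF.norm_coe_le_norm n
  rwa [norm_toBCF_eq_norm, Real.norm_eq_abs] at h

theorem norm_le_of_forall_abs_apply_le {f : C₀(ℕ, ℝ)} {C : ℝ} (hC : 0 ≤ C) (h : ∀ n, |f n| ≤ C) :
    ‖f‖ ≤ C := by
  rw [← norm_toBCF_eq_norm]
  exact (BoundedContinuousFunction.norm_le hC).mpr h

end ZeroAtInftyContinuousMap

theorem sum_smul_eSeq_apply (F : Finset ℕ) (c : ℕ → ℝ) (j : ℕ) :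
    (∑ m ∈ F, c m • eSeq m) j = if j ∈ F then c j else 0 := by
  induction F using Finset.induction_on with
  | empty => rfl
  | insert i F hi ih =>
    rw [sum_insert hi, ZeroAtInftyContinuousMap.add_apply, ih, ZeroAtInftyContinuousMap.smul_apply]
    by_cases hj : j = i
    · subst hj; simp [eSeq, hi]
    · simp [eSeq, hj]

theorem sum_range_pair_add_zero {M : Type*} [AddCommMonoid M] (f : ℕ → M) (N : ℕ) :
    ∑ n ∈ range N, (f (2 * n + 1) + f (2 * n + 2)) + f 0 = ∑ m ∈ range (2 * N + 1), f m := by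
  induction N with
  | zero => simp
  | succ N ih =>
    rw [sum_range_succ, show 2 * (N + 1) + 1 = 2 * N + 1 + 1 + 1 by ring, sum_range_succ,
      sum_range_succ, ← ih]
    abel

/-- `pairDiff a (φ ∘ u) n = φ (a n • (u (2 * n + 2) - u (2 * n + 1)))` for linear `φ`. -/
def pairDiff (a c : ℕ → ℝ) (n : ℕ) : ℝ := a n * (c (2 * n + 2) - c (2 * n + 1))

theorem pairDiff_sub (a c d : ℕ → ℝ) : pairDiff a (c - d) = pairDiff a c - pairDiff a d := by
  funext n
  simp only [pairDiff, Pi.sub_apply]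
  ring

theorem abs_le_of_hasSum_pairDiff {a d : ℕ → ℝ} {C δ S : ℝ} (ha : ∀ n, |a n| ≤ C)
    (hd : ∀ N, ∑ m ∈ range N, |d m| ≤ δ) (hS : HasSum (pairDiff a d) S) : |S| ≤ C * δ := by
  set g : ℕ → ℝ := fun n => |d (2 * n + 1)| + |d (2 * n + 2)|
  have hg : ∀ N, ∑ n ∈ range N, g n ≤ δ := fun N => by
    linarith [sum_range_pair_add_zero (fun m => |d m|) N, hd (2 * N + 1), abs_nonneg (d 0)]
  have hC : 0 ≤ C := (abs_nonneg _).trans (ha 0)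
  have hg_nonneg : ∀ n, 0 ≤ g n := fun n => by positivity
  have hterm : ∀ n, ‖pairDiff a d n‖ ≤ C * g n := fun n => by
    rw [pairDiff, Real.norm_eq_abs, abs_mul]
    exact mul_le_mul (ha n) ((abs_sub _ _).trans_eq (add_comm _ _)) (abs_nonneg _) hC
  have hS_le := tsum_of_norm_bounded ((summable_of_sum_range_le hg_nonneg hg).mul_left C).hasSum
    hterm
  rw [hS.tsum_eq, Real.norm_eq_abs, tsum_mul_left] at hS_le
  exact hS_le.trans (mul_le_mul_of_nonneg_left (Real.tsum_le_of_sum_range_le hg_nonneg hg) hC)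

theorem abs_sub_le_of_hasSum_pairDiff {a c : ℕ → ℝ} {C δ S t : ℝ} (k : ℕ)
    (ha : ∀ n, |a n| ≤ C) (hc : ∀ F : Finset ℕ, k ∉ F → ∑ m ∈ F, |c m| ≤ δ)
    (hS : HasSum (pairDiff a c) S) (ht : HasSum (pairDiff a (Pi.single k (c k))) t) :
    |S - t| ≤ C * δ := by
  set d : ℕ → ℝ := c - Pi.single k (c k)
  refine abs_le_of_hasSum_pairDiff (d := d) ha (fun N => ?_) (pairDiff_sub a c _ ▸ hS.sub ht)
  rw [← sum_erase (range N) (show |d k| = 0 by simp [d])]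
  calc ∑ m ∈ (range N).erase k, |d m| = ∑ m ∈ (range N).erase k, |c m| :=
        sum_congr rfl fun m hm => by simp [d, ne_of_mem_erase hm]
    _ ≤ δ := hc _ (notMem_erase k _)

theorem hasSum_pairDiff_single_even (a : ℕ → ℝ) (n₀ : ℕ) (v : ℝ) :
    HasSum (pairDiff a (Pi.single (2 * n₀ + 2) v)) (a n₀ * v) := by
  convert hasSum_single (f := pairDiff a (Pi.single (2 * n₀ + 2) v)) n₀ (fun n hn => ?_) using 1
  · simp [pairDiff]
  · simp [pairDiff, Pi.single_apply, hn]
    omega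

theorem hasSum_pairDiff_single_odd (a : ℕ → ℝ) (n₀ : ℕ) (v : ℝ) :
    HasSum (pairDiff a (Pi.single (2 * n₀ + 1) v)) (-(a n₀ * v)) := by
  convert hasSum_single (f := pairDiff a (Pi.single (2 * n₀ + 1) v)) n₀ (fun n hn => ?_) using 1
  · simp [pairDiff]
  · simp [pairDiff, hn, show 2 * n + 2 ≠ 2 * n₀ + 1 by omega]

theorem abs_sub_half_sub_le {a x₁ x₂ α β C δ : ℝ} (ha : |a| ≤ C) (hα : 1 - δ ≤ α) (hα₁ : α ≤ 1)
    (hβ : 1 - δ ≤ β) (hβ₁ : β ≤ 1) (hx₂ : |x₂ - a * α| ≤ C * δ) (hx₁ : |x₁ - -(a * β)| ≤ C * δ) :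
    |a - 2⁻¹ * (x₂ - x₁)| ≤ 2 * δ * C := by
  have hmid : |1 - (α + β) / 2| ≤ δ := abs_le.mpr ⟨by linarith, by linarith⟩
  calc |a - 2⁻¹ * (x₂ - x₁)| = |a * (1 - (α + β) / 2) - ((x₂ - a * α) - (x₁ - -(a * β))) / 2| := by
        ring_nf
    _ ≤ |a| * |1 - (α + β) / 2| + (|x₂ - a * α| + |x₁ - -(a * β)|) / 2 := by
        rw [← abs_mul]
        refine (abs_sub _ _).trans (add_le_add_right ?_ _)
        rw [abs_div, abs_two]
        exact div_le_div_of_nonneg_right (abs_sub _ _) zero_le_two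
    _ ≤ C * δ + (C * δ + C * δ) / 2 := by gcongr; exact (abs_nonneg _).trans ha
    _ = 2 * δ * C := by ring

section

variable {E : Type*} [NormedAddCommGroup E] [NormedSpace ℝ E]

def AlmostBiorthogonal (δ : ℝ) (u : ℕ → E) (ustar : ℕ → E →L[ℝ] ℝ) : Prop :=
  ∀ a : C₀(ℕ, ℝ), ‖a‖ ≤ 1 → ∀ n : ℕ, ∀ s : E,
    HasSum (fun m => if m = n then (0 : E) else a m • u m) s → |ustar n s| ≤ δ

namespace AlmostBiorthogonal

variable {δ : ℝ} {u : ℕ → E} {ustar : ℕ → E →L[ℝ] ℝ}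

theorem sum_abs_apply_le (hsmall : AlmostBiorthogonal δ u ustar)
    (k : ℕ) (F : Finset ℕ) (hk : k ∉ F) : ∑ m ∈ F, |ustar k (u m)| ≤ δ := by
  set σ : ℕ → ℝ := fun m => SignType.sign (ustar k (u m))
  set a : C₀(ℕ, ℝ) := ∑ m ∈ F, σ m • eSeq m
  have ha : ‖a‖ ≤ 1 := by
    refine ZeroAtInftyContinuousMap.norm_le_of_forall_abs_apply_le zero_le_one fun j => ?_
    rw [sum_smul_eSeq_apply]
    split_ifs
    · show |((SignType.sign (ustar k (u j)) : SignType) : ℝ)| ≤ 1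
      generalize SignType.sign (ustar k (u j)) = s
      cases s <;> simp
    · simp
  have hs : HasSum (fun m => if m = k then (0 : E) else a m • u m) (∑ m ∈ F, σ m • u m) := by
    have hterm : ∀ m, (if m = k then (0 : E) else a m • u m) = if m ∈ F then σ m • u m else 0 := by
      intro m
      rw [sum_smul_eSeq_apply]
      split_ifs with hmk hmF <;> simp_all
    simp only [hterm]
    have h : HasSum (fun m => if m ∈ F then σ m • u m else 0)
        (∑ m ∈ F, if m ∈ F then σ m • u m else 0) :=
      hasSum_sum_of_ne_finset_zero fun m hm => if_neg hm
    rwa [sum_ite_mem, inter_self] at h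
  have hval : ustar k (∑ m ∈ F, σ m • u m) = ∑ m ∈ F, |ustar k (u m)| := by
    simp only [map_sum, map_smul, smul_eq_mul, σ, sign_mul_self]
  simpa only [hval, abs_of_nonneg (sum_nonneg fun m _ => abs_nonneg (ustar k (u m)))]
    using hsmall a ha k _ hs

theorem abs_apply_sub_le (hsmall : AlmostBiorthogonal δ u ustar)
    {a : ℕ → ℝ} {C : ℝ} (ha : ∀ n, |a n| ≤ C) {x : E}
    (hx : HasSum (fun n => a n • (u (2 * n + 2) - u (2 * n + 1))) x) (k : ℕ) {t : ℝ}
    (ht : HasSum (pairDiff a (Pi.single k (ustar k (u k)))) t) :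
    |ustar k x - t| ≤ C * δ :=
  abs_sub_le_of_hasSum_pairDiff k ha (hsmall.sum_abs_apply_le k)
    (by simpa only [map_smul, map_sub, smul_eq_mul] using hx.mapL (ustar k) :
      HasSum (fun n => a n * (ustar k (u (2 * n + 2)) - ustar k (u (2 * n + 1)))) _) ht

theorem abs_sub_half_apply_sub_le (hsmall : AlmostBiorthogonal δ u ustar)
    (hdiag : ∀ k, 1 - δ ≤ ustar k (u k)) (hdiag₁ : ∀ k, ustar k (u k) ≤ 1)
    {a : ℕ → ℝ} {C : ℝ} (ha : ∀ n, |a n| ≤ C) {x : E}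
    (hx : HasSum (fun n => a n • (u (2 * n + 2) - u (2 * n + 1))) x) (n : ℕ) :
    |a n - 2⁻¹ * (ustar (2 * n + 2) x - ustar (2 * n + 1) x)| ≤ 2 * δ * C :=
  abs_sub_half_sub_le (ha n) (hdiag _) (hdiag₁ _) (hdiag _) (hdiag₁ _)
    (hsmall.abs_apply_sub_le ha hx _ (hasSum_pairDiff_single_even a n _))
    (hsmall.abs_apply_sub_le ha hx _ (hasSum_pairDiff_single_odd a n _))

end AlmostBiorthogonal

end

theorem exists_mul_eq_one_of_norm_one_sub_le {R : Type*} [NormedRing R] [HasSummableGeomSeries R]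
    (h1 : ‖(1 : R)‖ ≤ 1) {T : R} {ε : ℝ} (hT : ‖1 - T‖ ≤ ε) (hε : ε < 1) :
    ∃ S : R, ‖S‖ ≤ (1 - ε)⁻¹ ∧ S * T = 1 := by
  have hlt : ‖1 - T‖ < 1 := hT.trans_lt hε
  refine ⟨∑' n, (1 - T) ^ n, ?_, by simpa using geom_series_mul_neg (1 - T) hlt⟩
  calc ‖∑' n, (1 - T) ^ n‖ ≤ ‖(1 : R)‖ - 1 + (1 - ‖1 - T‖)⁻¹ :=
        tsum_geometric_le_of_norm_lt_one _ hlt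
    _ ≤ (1 - ε)⁻¹ := by linarith [inv_anti₀ (sub_pos.2 hε) (sub_le_sub_left hT 1)]

theorem dowling_randrianantoanina_turett_quantitative_general
    {E : Type*} [NormedAddCommGroup E] [NormedSpace ℝ E]
    (M : Set (E →L[ℝ] ℝ))
    (hMball : M ⊆ Metric.closedBall 0 1)
    (δ : ℝ) (hδ0 : 0 < δ) (hδ : δ < 1 / 4)
    (u : ℕ → E) (hu : ∀ n, ‖u n‖ ≤ 1)
    (ustar : ℕ → (E →L[ℝ] ℝ)) (hustar : ∀ n, ustar n ∈ M)
    (hbi : ∀ n, 1 - δ ≤ ustar n (u n))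
    (hsmall : ∀ a : C₀(ℕ, ℝ), ‖a‖ ≤ 1 → ∀ n : ℕ, ∀ s : E,
      HasSum (fun m => if m = n then (0 : E) else a m • u m) s → |ustar n s| ≤ δ)
    (w : ℕ → E) (hw : ∀ n, w n = u (2 * n + 2) - u (2 * n + 1))
    (wstar : ℕ → (E →L[ℝ] ℝ))
    (hwstar : ∀ n, wstar n = (2 : ℝ)⁻¹ • (ustar (2 * n + 2) - ustar (2 * n + 1)))
    (J : C₀(ℕ, ℝ) →L[ℝ] E) (hJ : ∀ a : C₀(ℕ, ℝ), HasSum (fun n => a n • w n) (J a))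
    (Q : E →L[ℝ] C₀(ℕ, ℝ)) (hQ : ∀ (x : E) (n : ℕ), Q x n = wstar n x) :
    ‖ContinuousLinearMap.id ℝ C₀(ℕ, ℝ) - Q.comp J‖ ≤ 2 * δ ∧
      ∃ R : C₀(ℕ, ℝ) →L[ℝ] C₀(ℕ, ℝ), ‖R‖ ≤ (1 - 2 * δ)⁻¹ ∧
        R.comp (Q.comp J) = ContinuousLinearMap.id ℝ C₀(ℕ, ℝ) := by
  have hustar_le : ∀ k, ‖ustar k‖ ≤ 1 := fun k => by simpa using hMball (hustar k)
  have hdiag₁ : ∀ k, ustar k (u k) ≤ 1 := fun k => (le_abs_self _).trans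
    (((ustar k).le_opNorm (u k)).trans (mul_le_one₀ (hustar_le k) (norm_nonneg _) (hu k)))
  have hJu : ∀ a, HasSum (fun n => a n • (u (2 * n + 2) - u (2 * n + 1))) (J a) := fun a => by
    simpa only [hw] using hJ a
  have hQJ : ∀ a n, Q (J a) n = 2⁻¹ * (ustar (2 * n + 2) (J a) - ustar (2 * n + 1) (J a)) :=
    fun a n => by simp [hQ, hwstar]
  have hnorm : ‖ContinuousLinearMap.id ℝ C₀(ℕ, ℝ) - Q.comp J‖ ≤ 2 * δ := by
    refine ContinuousLinearMap.opNorm_le_bound _ (by positivity) fun a => ?_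
    refine ZeroAtInftyContinuousMap.norm_le_of_forall_abs_apply_le (by positivity) fun n => ?_
    simpa [hQJ] using AlmostBiorthogonal.abs_sub_half_apply_sub_le hsmall hbi hdiag₁
      a.abs_apply_le_norm (hJu a) n
  obtain ⟨R, hR, hRQJ⟩ := exists_mul_eq_one_of_norm_one_sub_le ContinuousLinearMap.norm_id_le
    (T := Q.comp J) hnorm (by linarith)
  exact ⟨hnorm, R, hR, hRQJ⟩

/-- (Dowling–Randrianantoanina–Turett, quantitative form.) Given a
1-norming weak* sequentially compact set `M ⊆ B_{E*}`, sequences `(u_n) ⊆ B_E`,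
`(u_n*) ⊆ M` with `u_n*(u_n) ≥ 1 − δ`, `(u_n*)` weak* convergent, and the almost-biorthogonality
condition, the operators `J : c₀ → E`, `(a_n) ↦ Σ a_n w_n`, and `Q : E → c₀`,
`x ↦ (w_n*(x))`, built from `w_n = u_{2n} − u_{2n−1}` and `w_n* = (u_{2n}* − u_{2n−1}*)/2`,
satisfy `‖I − QJ‖ ≤ 2δ`; hence there is `R` with `‖R‖ ≤ (1 − 2δ)⁻¹` and `R Q J = I`. -/
theorem dowling_randrianantoanina_turett_quantitative
    {E : Type*} [NormedAddCommGroup E] [NormedSpace ℝ E] [CompleteSpace E]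
    (M : Set (E →L[ℝ] ℝ))
    (hMball : M ⊆ Metric.closedBall 0 1)
    (hnorming : ∀ x : E, ‖x‖ = ⨆ φ : M, |(φ : E →L[ℝ] ℝ) x|)
    (hseqcpt : ∀ φ : ℕ → (E →L[ℝ] ℝ), (∀ n, φ n ∈ M) →
      ∃ (ψ : ℕ → ℕ) (φlim : E →L[ℝ] ℝ), StrictMono ψ ∧
        ∀ v : E, Tendsto (fun n => φ (ψ n) v) atTop (𝓝 (φlim v)))
    (δ : ℝ) (hδ0 : 0 < δ) (hδ : δ < 1 / 4)
    (u : ℕ → E) (hu : ∀ n, ‖u n‖ ≤ 1)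
    (ustar : ℕ → (E →L[ℝ] ℝ)) (hustar : ∀ n, ustar n ∈ M)
    (hbi : ∀ n, 1 - δ ≤ ustar n (u n))
    (hconv : ∃ φlim : E →L[ℝ] ℝ, ∀ v : E, Tendsto (fun n => ustar n v) atTop (𝓝 (φlim v)))
    (hsmall : ∀ a : C₀(ℕ, ℝ), ‖a‖ ≤ 1 → ∀ n : ℕ, ∀ s : E,
      HasSum (fun m => if m = n then (0 : E) else a m • u m) s → |ustar n s| ≤ δ)
    (w : ℕ → E) (hw : ∀ n, w n = u (2 * n + 2) - u (2 * n + 1))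
    (wstar : ℕ → (E →L[ℝ] ℝ))
    (hwstar : ∀ n, wstar n = (2 : ℝ)⁻¹ • (ustar (2 * n + 2) - ustar (2 * n + 1)))
    (J : C₀(ℕ, ℝ) →L[ℝ] E) (hJ : ∀ a : C₀(ℕ, ℝ), HasSum (fun n => a n • w n) (J a))
    (Q : E →L[ℝ] C₀(ℕ, ℝ)) (hQ : ∀ (x : E) (n : ℕ), Q x n = wstar n x) :
    ‖ContinuousLinearMap.id ℝ C₀(ℕ, ℝ) - Q.comp J‖ ≤ 2 * δ ∧
      ∃ R : C₀(ℕ, ℝ) →L[ℝ] C₀(ℕ, ℝ), ‖R‖ ≤ (1 - 2 * δ)⁻¹ ∧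
        R.comp (Q.comp J) = ContinuousLinearMap.id ℝ C₀(ℕ, ℝ) :=
  dowling_randrianantoanina_turett_quantitative_general M hMball δ hδ0 hδ u hu ustar hustar hbi
    hsmall w hw wstar hwstar J hJ Q hQ
end
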